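/- arXiv:2101.06260 — 6 statements merged into one kernel-verified Lean document; each statement's English description precedes it below -/
import Mathlib

section
/- For all non-negative integers n and all integers r ≥ 2, the number of partitions of n with no part divisible by r equals the number of partitions of n in which every part appears at most r−1 times; that is, |O_{0,r}(n)| = |D_{0,r}(n)| (Glaisher's identity). -/
open Finset

/-- The number of parts of a partition. -/
def numParts {n : ℕ} (p : Nat.Partition n) : ℕ := Multiset.card p.parts

/-- The number of different parts of a partition. -/
def numDistinctParts {n : ℕ} (p : Nat.Partition n) : ℕ := p.parts.toFinset.card

/-- `O_{j,r}(n)`: partitions of `n` with exactly `j` different parts divisible by `r`. -/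
def setO (j r n : ℕ) : Finset (Nat.Partition n) :=
  Finset.univ.filter fun p => (p.parts.toFinset.filter fun i => r ∣ i).card = j

/-- `D_{j,r}(n)`: partitions of `n` with exactly `j` different parts repeated at least `r`
times (all other parts appearing at most `r - 1` times). -/
def setD (j r n : ℕ) : Finset (Nat.Partition n) :=
  Finset.univ.filter fun p => (p.parts.toFinset.filter fun i => r ≤ p.parts.count i).card = j

/-- `O_{≤j,r}(n)`: partitions of `n` with at most `j` different parts divisible by `r`. -/
def setOle (j r n : ℕ) : Finset (Nat.Partition n) :=
  Finset.univ.filter fun p => (p.parts.toFinset.filter fun i => r ∣ i).card ≤ j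

/-- `D_{≤j,r}(n)`: partitions of `n` with at most `j` different parts repeated at least `r`
times (all other parts appearing at most `r - 1` times). -/
def setDle (j r n : ℕ) : Finset (Nat.Partition n) :=
  Finset.univ.filter fun p => (p.parts.toFinset.filter fun i => r ≤ p.parts.count i).card ≤ j

/-- `ℓ_t(λ)`: the number of parts of `λ` congruent to `t` modulo `r`, counted with
multiplicity. -/
def ellMod {n : ℕ} (r t : ℕ) (p : Nat.Partition n) : ℕ :=
  Multiset.card (p.parts.filter fun i => i % r = t)

/-- `ℓ̄_t(λ)`: the number of different parts of `λ` whose residual multiplicity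
(multiplicity mod `r`) is at least `t`. -/
def ellBarMod {n : ℕ} (r t : ℕ) (p : Nat.Partition n) : ℕ :=
  (p.parts.toFinset.filter fun i => t ≤ p.parts.count i % r).card

/-- `b_{j,r}(n)`: the difference between the number of parts in all partitions in
`O_{j,r}(n)` and the number of parts in all partitions in `D_{j,r}(n)`. -/
def bDiff (j r n : ℕ) : ℤ :=
  (∑ p ∈ setO j r n, (numParts p : ℤ)) - ∑ p ∈ setD j r n, (numParts p : ℤ)

/-- `b_{≤j,r}(n)`. -/
def bDiffLe (j r n : ℕ) : ℤ :=
  (∑ p ∈ setOle j r n, (numParts p : ℤ)) - ∑ p ∈ setDle j r n, (numParts p : ℤ)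

/-- `E_{j,r,t}(n)`. -/
def EDiff (j r t n : ℕ) : ℤ :=
  (∑ p ∈ setO j r n, ((ellMod r t p : ℤ) - (ellMod r 0 p : ℤ))) -
    ∑ p ∈ setD j r n, (ellBarMod r t p : ℤ)

/-- `b'_{j,r}(n)`: the difference between the number of different parts in all partitions in
`D_{j,r}(n)` and the number of different parts in all partitions in `O_{j,r}(n)`. -/
def bDiff' (j r n : ℕ) : ℤ :=
  (∑ p ∈ setD j r n, (numDistinctParts p : ℤ)) - ∑ p ∈ setO j r n, (numDistinctParts p : ℤ)

/-- `b'_{≤j,r}(n)`. -/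
def bDiffLe' (j r n : ℕ) : ℤ :=
  (∑ p ∈ setDle j r n, (numDistinctParts p : ℤ)) - ∑ p ∈ setOle j r n, (numDistinctParts p : ℤ)

/-- `T_{j,r}(n)`: the number of different parts with multiplicity between `r + 1` and
`2r - 1` in all partitions in `D_{j,r}(n)`. -/
def Tcount (j r n : ℕ) : ℕ :=
  ∑ p ∈ setD j r n,
    (p.parts.toFinset.filter fun i =>
      r + 1 ≤ p.parts.count i ∧ p.parts.count i ≤ 2 * r - 1).card

theorem setO_zero_eq_restricted (r n : ℕ) :
    setO 0 r n = Nat.Partition.restricted n (¬ r ∣ ·) := by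
  ext p
  simp [setO, Nat.Partition.restricted, filter_eq_empty_iff]

theorem setD_zero_eq_countRestricted (r n : ℕ) :
    setD 0 r n = Nat.Partition.countRestricted n r := by
  ext p
  simp [setD, Nat.Partition.countRestricted, filter_eq_empty_iff]

/-- Glaisher's identity: `|O_{0,r}(n)| = |D_{0,r}(n)|`. -/
theorem glaisher_identity (n r : ℕ) (hr : 2 ≤ r) :
    (setO 0 r n).card = (setD 0 r n).card := by
  rw [setO_zero_eq_restricted, setD_zero_eq_countRestricted]
  exact Nat.Partition.card_restricted_eq_card_countRestricted n (by omega)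
end

section
/- For all non-negative integers n, j and all integers r ≥ 2, the number of partitions of n with exactly j different parts divisible by r equals the number of partitions of n in which exactly j different parts are repeated at least r times and all other parts appear at most r−1 times; that is, |O_{j,r}(n)| = |D_{j,r}(n)| (Franklin's identity). -/
open Finset

/-!
A partition `λ` of `n` splits uniquely as `λ = μ + r ⋆ ν` with `ν` a partition of some `b`, `μ` a
partition of `n - r b`, and `r ⋆ ν` of weight `r b`, in two ways:
* `μ` the parts of `λ` not divisible by `r`, `ν` the other parts divided by `r`, and `r ⋆ ν` obtained
  by multiplying every part by `r`;
* each multiplicity `c` of `λ` written as `(c mod r) + r ⌊c / r⌋`, `μ` carrying the multiplicities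
  `c mod r` and `ν` the multiplicities `⌊c / r⌋`, and `r ⋆ ν` repeating every part `r` times.
The distinct parts of `ν` correspond to the distinct parts of `λ` divisible by `r` in the first
splitting, and to those repeated at least `r` times in the second. So both `|O_{j,r}(n)|` and
`|D_{j,r}(n)|` are sums over `b` of (number of admissible `μ`) × (partitions of `b` with `j`
distinct parts), and the two kinds of admissible `μ` are equinumerous by Glaisher's theorem.
-/

namespace Multiset

variable {α : Type*} [DecidableEq α]

noncomputable def mapCount (f : ℕ → ℕ) (hf : f 0 = 0) (m : Multiset α) : Multiset α :=
  Finsupp.toMultiset (Finsupp.mapRange f hf (Multiset.toFinsupp m))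

@[simp]
theorem count_mapCount (f : ℕ → ℕ) (hf : f 0 = 0) (m : Multiset α) (a : α) :
    (m.mapCount f hf).count a = f (m.count a) := by
  simp [mapCount, Finsupp.count_toMultiset]

end Multiset

structure ScaledSplitting (r : ℕ) where
  residue : Multiset ℕ → Multiset ℕ
  quotient : Multiset ℕ → Multiset ℕ
  inflate : Multiset ℕ → Multiset ℕ
  IsResidue : Multiset ℕ → Prop
  residue_add_inflate_quotient (m : Multiset ℕ) : residue m + inflate (quotient m) = m
  isResidue_residue (m : Multiset ℕ) : IsResidue (residue m)
  quotient_add_inflate {μ : Multiset ℕ} (hμ : IsResidue μ) (ν : Multiset ℕ) :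
    quotient (μ + inflate ν) = ν
  sum_inflate (ν : Multiset ℕ) : (inflate ν).sum = r * ν.sum
  residue_le (m : Multiset ℕ) : residue m ≤ m
  pos_of_mem_quotient {m : Multiset ℕ} (hm : ∀ i ∈ m, 0 < i) {i : ℕ} :
    i ∈ quotient m → 0 < i
  pos_of_mem_inflate {ν : Multiset ℕ} (hν : ∀ i ∈ ν, 0 < i) {i : ℕ} :
    i ∈ inflate ν → 0 < i

namespace ScaledSplitting

variable {r : ℕ} (s : ScaledSplitting r)

theorem sum_residue_add_mul_sum_quotient (m : Multiset ℕ) :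
    (s.residue m).sum + r * (s.quotient m).sum = m.sum := by
  rw [← s.sum_inflate, ← Multiset.sum_add, s.residue_add_inflate_quotient]

theorem sum_residue (m : Multiset ℕ) : (s.residue m).sum = m.sum - r * (s.quotient m).sum := by
  have := s.sum_residue_add_mul_sum_quotient m
  omega

theorem mul_sum_quotient_le (m : Multiset ℕ) : r * (s.quotient m).sum ≤ m.sum :=
  s.sum_residue_add_mul_sum_quotient m ▸ Nat.le_add_left _ _

theorem residue_add_inflate {μ : Multiset ℕ} (hμ : s.IsResidue μ) (ν : Multiset ℕ) :
    s.residue (μ + s.inflate ν) = μ :=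
  add_right_cancel (b := s.inflate ν) <| by
    nth_rw 2 [← s.quotient_add_inflate hμ ν]
    exact s.residue_add_inflate_quotient _

open Classical in
theorem card_fiber (P : Multiset ℕ → Prop) [DecidablePred P] {n b : ℕ} (hb : r * b ≤ n) :
    #{p : Nat.Partition n | P (s.quotient p.parts) ∧ (s.quotient p.parts).sum = b} =
      #{μ : Nat.Partition (n - r * b) | s.IsResidue μ.parts} *
        #{ν : Nat.Partition b | P ν.parts} := by
  rw [← card_product]
  refine card_bij'
    (fun p hp =>
      (⟨s.residue p.parts, fun hi => p.parts_pos (Multiset.mem_of_le (s.residue_le _) hi),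
          by rw [s.sum_residue, p.parts_sum, (mem_filter.mp hp).2.2]⟩,
        ⟨s.quotient p.parts, s.pos_of_mem_quotient (fun _ => p.parts_pos),
          (mem_filter.mp hp).2.2⟩))
    (fun x _ => ⟨x.1.parts + s.inflate x.2.parts, ?_, ?_⟩) ?_ ?_ ?_ ?_
  · intro i hi
    obtain hi | hi := Multiset.mem_add.mp hi
    exacts [x.1.parts_pos hi, s.pos_of_mem_inflate (fun _ => x.2.parts_pos) hi]
  · rw [Multiset.sum_add, s.sum_inflate, x.1.parts_sum, x.2.parts_sum]
    omega
  · intro p hp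
    simp only [mem_filter, mem_univ, true_and] at hp
    simp [hp.1, s.isResidue_residue]
  · intro x hx
    simp only [mem_product, mem_filter, mem_univ, true_and] at hx
    simp [s.quotient_add_inflate hx.1, hx.2, x.2.parts_sum]
  · intro p _
    exact Nat.Partition.ext (s.residue_add_inflate_quotient p.parts)
  · intro x hx
    simp only [mem_product, mem_filter, mem_univ, true_and] at hx
    ext : 2 <;> simp [s.residue_add_inflate hx.1, s.quotient_add_inflate hx.1]

open Classical in
theorem card_filter_quotient (hr : 0 < r) (P : Multiset ℕ → Prop) [DecidablePred P] (n : ℕ) :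
    #{p : Nat.Partition n | P (s.quotient p.parts)} =
      ∑ b ∈ range (n / r + 1),
        #{μ : Nat.Partition (n - r * b) | s.IsResidue μ.parts} *
          #{ν : Nat.Partition b | P ν.parts} := by
  rw [card_eq_sum_card_fiberwise (f := fun p => (s.quotient p.parts).sum)
    (t := range (n / r + 1))]
  · refine sum_congr rfl fun b hb => ?_
    rw [filter_filter, s.card_fiber P]
    rw [mem_range, Nat.lt_succ_iff, Nat.le_div_iff_mul_le hr] at hb
    linarith
  · intro p _
    rw [mem_coe, mem_range, Nat.lt_succ_iff, Nat.le_div_iff_mul_le hr, mul_comm]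
    simpa [p.parts_sum] using s.mul_sum_quotient_le p.parts

end ScaledSplitting

namespace ScaledSplitting

variable {r : ℕ} (hr : 0 < r)

def byDivisibility : ScaledSplitting r where
  residue m := m.filter (¬ r ∣ ·)
  quotient m := (m.filter (r ∣ ·)).map (· / r)
  inflate ν := ν.map (r * ·)
  IsResidue μ := ∀ i ∈ μ, ¬ r ∣ i
  residue_add_inflate_quotient m := by
    conv_rhs => rw [← Multiset.filter_add_not (r ∣ ·) m]
    rw [add_comm, Multiset.map_map]
    congr 1
    exact (Multiset.map_congr rfl fun i hi =>
      Nat.mul_div_cancel' (Multiset.mem_filter.mp hi).2).trans (Multiset.map_id _)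
  isResidue_residue m _ hi := (Multiset.mem_filter.mp hi).2
  quotient_add_inflate hμ ν := by
    rw [Multiset.filter_add, Multiset.filter_eq_nil.mpr hμ,
      Multiset.filter_eq_self.mpr (by simp), zero_add, Multiset.map_map]
    simp [Nat.mul_div_cancel_left _ hr]
  sum_inflate ν := by simpa using Multiset.sum_map_mul_left (s := ν) (f := id) (a := r)
  residue_le m := Multiset.filter_le _ m
  pos_of_mem_quotient hm i hi := by
    obtain ⟨k, hk, rfl⟩ := Multiset.mem_map.mp hi
    obtain ⟨hk, hdvd⟩ := Multiset.mem_filter.mp hk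
    exact Nat.div_pos (Nat.le_of_dvd (hm k hk) hdvd) hr
  pos_of_mem_inflate hν i hi := by
    obtain ⟨k, hk, rfl⟩ := Multiset.mem_map.mp hi
    exact Nat.mul_pos hr (hν k hk)

theorem card_toFinset_quotient_byDivisibility (m : Multiset ℕ) :
    ((byDivisibility hr).quotient m).toFinset.card = (m.toFinset.filter (r ∣ ·)).card := by
  simp only [byDivisibility, Multiset.toFinset_map, Multiset.toFinset_filter]
  refine card_image_of_injOn fun a ha b hb hab => ?_
  exact (Nat.div_left_inj (mem_filter.mp ha).2 (mem_filter.mp hb).2).mp hab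

noncomputable def byMultiplicity : ScaledSplitting r where
  residue m := m.mapCount (· % r) (Nat.zero_mod r)
  quotient m := m.mapCount (· / r) (Nat.zero_div r)
  inflate ν := r • ν
  IsResidue μ := ∀ i ∈ μ, μ.count i < r
  residue_add_inflate_quotient m := by
    ext a
    simp [Multiset.count_nsmul, Nat.mod_add_div]
  isResidue_residue m i _ := by
    simpa using Nat.mod_lt _ hr
  quotient_add_inflate {μ} hμ ν := by
    ext a
    have : μ.count a < r := by
      by_cases ha : a ∈ μ
      · exact hμ a ha
      · rwa [Multiset.count_eq_zero.mpr ha]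
    simp [Multiset.count_nsmul, Nat.add_mul_div_left _ _ hr, Nat.div_eq_of_lt this]
  sum_inflate ν := by rw [Multiset.sum_nsmul, smul_eq_mul]
  residue_le m := Multiset.le_iff_count.mpr fun a => by simpa using Nat.mod_le _ r
  pos_of_mem_quotient hm i hi := by
    refine hm i (Multiset.count_pos.mp ?_)
    have := Multiset.count_pos.mpr hi
    simp only [Multiset.count_mapCount] at this
    exact Nat.pos_of_div_pos this
  pos_of_mem_inflate hν i hi := hν i (Multiset.mem_of_mem_nsmul hi)

theorem toFinset_quotient_byMultiplicity (m : Multiset ℕ) :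
    ((byMultiplicity hr).quotient m).toFinset = m.toFinset.filter (r ≤ m.count ·) := by
  refine Finset.ext fun a => ?_
  simp only [Multiset.mem_toFinset, mem_filter, ← Multiset.count_pos, byMultiplicity,
    Multiset.count_mapCount, Nat.div_pos_iff]
  omega

end ScaledSplitting

/-- Franklin's identity: `|O_{j,r}(n)| = |D_{j,r}(n)|`. -/
theorem franklin_identity (n j r : ℕ) (hr : 2 ≤ r) :
    (setO j r n).card = (setD j r n).card := by
  have hr0 : 0 < r := by omega
  let P : Multiset ℕ → Prop := fun ν => ν.toFinset.card = j
  calc (setO j r n).card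
        = #{p : Nat.Partition n | P ((ScaledSplitting.byDivisibility hr0).quotient p.parts)} := by
          simp only [setO, P, ScaledSplitting.card_toFinset_quotient_byDivisibility]
    _ = ∑ b ∈ range (n / r + 1),
          #(Nat.Partition.restricted (n - r * b) (¬ r ∣ ·)) *
            #{ν : Nat.Partition b | P ν.parts} := by
        unfold Nat.Partition.restricted
        convert (ScaledSplitting.byDivisibility hr0).card_filter_quotient hr0 P n
        exact Iff.rfl
    _ = ∑ b ∈ range (n / r + 1),
          #(Nat.Partition.countRestricted (n - r * b) r) *
            #{ν : Nat.Partition b | P ν.parts} := by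
        simp_rw [Nat.Partition.card_restricted_eq_card_countRestricted _ hr0]
    _ = #{p : Nat.Partition n | P ((ScaledSplitting.byMultiplicity hr0).quotient p.parts)} := by
        unfold Nat.Partition.countRestricted
        convert ((ScaledSplitting.byMultiplicity hr0).card_filter_quotient hr0 P n).symm
        exact Iff.rfl
    _ = (setD j r n).card := by
        simp only [setD, P, ScaledSplitting.toFinset_quotient_byMultiplicity]
end

section
/- For all non-negative integers n, the difference between the total number of parts in all partitions of n into odd parts and the total number of parts in all partitions of n into distinct parts equals |O_{1,2}(n)|, the number of partitions of n whose set of even parts has exactly one element, and also equals |D_{1,2}(n)|, the number of partitions of n with exactly one part repeated (Andrews' theorem, originally Beck's conjecture). -/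
/-!
Write `p m` for the number of partitions of `m` into distinct parts (by Euler, also into odd
parts) and `d_b m` for the number of those having `b` as a part. Removing `j` copies of a part
`k` from a partition identifies
* the parts of all odd partitions of `n` with `∑_j ∑_{k odd} p (n - j k)`,
* `O_{1,2}(n)`, via its even part `k` of multiplicity `j`, with `∑_j ∑_{k even} p (n - j k)`,
* `D_{1,2}(n)`, via all but one copy of its repeated part `b`, with `∑_b ∑_{k ≥ 1} d_b (n - k b)`,
while the parts of all distinct partitions of `n` number `∑_b d_b n`. Since
`p m = d_b m + d_b (m + b)`, an induction on `n` in steps of `b` gives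
`∑_{k odd} p (n - k b) = d_b n + ∑_{k even} p (n - k b)` and
`∑_{k ≥ 1} d_b (n - k b) = ∑_{k even} p (n - k b)`.
-/

open Finset

theorem Finset.card_filter_card_eq_one_eq_sum {α β : Type*} [DecidableEq β] (s : Finset α)
    (t : Finset β) (F : α → Finset β) (hF : ∀ x ∈ s, F x ⊆ t) :
    #{x ∈ s | #(F x) = 1} = ∑ e ∈ t, #{x ∈ s | F x = {e}} := by
  have hmaps : Set.MapsTo F (({x ∈ s | #(F x) = 1} : Finset α) : Set α)
      (t.map ⟨singleton, singleton_injective⟩) := by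
    intro x hx
    obtain ⟨hxs, e, he⟩ : x ∈ s ∧ ∃ e, F x = {e} := by simpa [card_eq_one] using hx
    exact mem_map.2 ⟨e, hF x hxs (he ▸ mem_singleton_self e), he.symm⟩
  rw [card_eq_sum_card_fiberwise hmaps, sum_map]
  refine sum_congr rfl fun e _ => ?_
  rw [filter_filter]
  refine congrArg card (filter_congr fun x _ => ?_)
  simp only [Function.Embedding.coeFn_mk, and_iff_right_iff_imp]
  exact fun he => he ▸ card_singleton e

def multipleSum (P : ℕ → Prop) [DecidablePred P] (g : ℕ → ℕ) (b n : ℕ) : ℕ :=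
  ∑ k ∈ Icc 1 n with P k ∧ b * k ≤ n, g (n - b * k)

section multipleSum

variable {P Q : ℕ → Prop} [DecidablePred P] [DecidablePred Q] {g h : ℕ → ℕ} {b n : ℕ}

theorem multipleSum_of_lt (hb : n < b) : multipleSum P g b n = 0 :=
  sum_eq_zero fun k hk => by
    simp only [mem_filter, mem_Icc] at hk
    nlinarith

theorem multipleSum_eq_add (hb : 0 < b) (hbn : b ≤ n) (hPQ : ∀ k, P (k + 1) ↔ Q k) :
    multipleSum P g b n = (if P 1 then g (n - b) else 0) + multipleSum Q g b (n - b) := by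
  unfold multipleSum
  rw [← sum_filter_add_sum_filter_not _ (· = 1), sum_filter, sum_ite_eq']
  congr 1
  · simp [show 1 ≤ n by omega, hbn]
  · have hle (k : ℕ) : k ≤ b * k := Nat.le_mul_of_pos_left k hb
    refine sum_nbij' (· - 1) (· + 1) ?_ ?_ (fun k hk => ?_) (fun k _ => rfl) ?_ <;>
      simp only [mem_filter, mem_Icc] at *
    · rintro k ⟨⟨⟨hk0, -⟩, hP, hkb⟩, hk1⟩
      obtain ⟨k, rfl⟩ := Nat.exists_eq_add_one.2 (show 0 < k by omega)
      simp only [Nat.add_sub_cancel, mul_add_one, ← hPQ] at hkb ⊢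
      have := hle k
      exact ⟨⟨by omega, by omega⟩, hP, by omega⟩
    · rintro k ⟨⟨hk1, -⟩, hQ, hkb⟩
      simp only [mul_add_one, hPQ]
      have := hle k
      exact ⟨⟨⟨by omega, by omega⟩, hQ, by omega⟩, by omega⟩
    · omega
    · rintro k ⟨⟨⟨hk0, -⟩, -⟩, hk1⟩
      obtain ⟨k, rfl⟩ := Nat.exists_eq_add_one.2 (show 0 < k by omega)
      simp only [Nat.add_sub_cancel, mul_add_one]
      congr 1
      omega

variable (hb : 0 < b) (hgh : ∀ m, g m = h m + h (m + b)) (hh : ∀ m < b, h m = 0)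
include hb hgh hh

theorem multipleSum_odd_eq_add_multipleSum_even (n : ℕ) :
    multipleSum Odd g b n = h n + multipleSum Even g b n := by
  induction n using Nat.strong_induction_on with
  | _ n ih =>
    rcases lt_or_ge n b with hnb | hbn
    · rw [multipleSum_of_lt hnb, multipleSum_of_lt hnb, hh n hnb]
    · have hsplit : g (n - b) = h (n - b) + h n := by rw [hgh, Nat.sub_add_cancel hbn]
      rw [multipleSum_eq_add hb hbn fun _ => Nat.odd_add_one.trans Nat.not_odd_iff_even,
        multipleSum_eq_add hb hbn fun _ => Nat.even_add_one.trans Nat.not_even_iff_odd,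
        ih (n - b) (by omega), if_pos odd_one, if_neg Nat.not_even_one, hsplit]
      ring

theorem multipleSum_true_eq_multipleSum_even (n : ℕ) :
    multipleSum (fun _ => True) h b n = multipleSum Even g b n := by
  induction n using Nat.strong_induction_on with
  | _ n ih =>
    rcases lt_or_ge n b with hnb | hbn
    · rw [multipleSum_of_lt hnb, multipleSum_of_lt hnb]
    · rw [multipleSum_eq_add hb hbn fun _ => Iff.rfl,
        multipleSum_eq_add hb hbn fun _ => Nat.even_add_one.trans Nat.not_even_iff_odd,
        ih (n - b) (by omega), multipleSum_odd_eq_add_multipleSum_even hb hgh hh,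
        if_pos trivial, if_neg Nat.not_even_one, zero_add]

end multipleSum

namespace Nat.Partition

open Multiset (replicate)

theorem mem_Icc_of_mem_parts {n a : ℕ} {p : n.Partition} (h : a ∈ p.parts) : a ∈ Icc 1 n :=
  mem_Icc.2 ⟨p.parts_pos h, le_of_mem_parts h⟩

theorem toFinset_parts_subset_Icc {n : ℕ} (p : n.Partition) : p.parts.toFinset ⊆ Icc 1 n :=
  fun _ ha => mem_Icc_of_mem_parts (Multiset.mem_toFinset.1 ha)

theorem card_parts_eq_sum_count {n : ℕ} (p : n.Partition) :
    Multiset.card p.parts = ∑ a ∈ Icc 1 n, p.parts.count a :=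
  (Multiset.sum_count_eq_card fun _ ha => mem_Icc_of_mem_parts ha).symm

theorem card_parts_le {n : ℕ} (p : n.Partition) : Multiset.card p.parts ≤ n := by
  simpa [p.parts_sum] using Multiset.card_nsmul_le_sum fun _ hx => p.parts_pos hx

theorem count_parts_le {n : ℕ} (p : n.Partition) (a : ℕ) : p.parts.count a ≤ n :=
  (Multiset.count_le_card a _).trans p.card_parts_le

theorem mul_le_of_replicate_le_parts {n a j : ℕ} {p : n.Partition}
    (h : replicate j a ≤ p.parts) : j * a ≤ n := by
  obtain ⟨u, hu⟩ := Multiset.le_iff_exists_add.1 h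
  have := congrArg Multiset.sum hu
  simp only [p.parts_sum, Multiset.sum_add, Multiset.sum_replicate, smul_eq_mul] at this
  omega

theorem card_eq_card_of_mem_iff_replicate_add {m n a j : ℕ} (ha : 0 < a) (hn : m + j * a = n)
    {S : Finset n.Partition} {T : Finset m.Partition} {R : Multiset ℕ → Prop}
    (hS : ∀ p, p ∈ S ↔ ∃ t, p.parts = replicate j a + t ∧ R t)
    (hT : ∀ q, q ∈ T ↔ R q.parts) : #S = #T := by
  symm
  refine card_bij (fun q _ => ⟨replicate j a + q.parts, fun hi => ?_, ?_⟩) (fun q hq => ?_)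
    (fun q₁ _ q₂ _ h => ?_) (fun p hp => ?_)
  · rcases Multiset.mem_add.1 hi with hi | hi
    · exact Multiset.eq_of_mem_replicate hi ▸ ha
    · exact q.parts_pos hi
  · simp only [Multiset.sum_add, Multiset.sum_replicate, smul_eq_mul, q.parts_sum]
    omega
  · exact (hS _).2 ⟨q.parts, rfl, (hT q).1 hq⟩
  · exact Nat.Partition.ext (add_left_cancel (congrArg Nat.Partition.parts h))
  · obtain ⟨t, hpt, hR⟩ := (hS p).1 hp
    have hsum := congrArg Multiset.sum hpt
    simp only [p.parts_sum, Multiset.sum_add, Multiset.sum_replicate, smul_eq_mul] at hsum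
    exact ⟨⟨t, fun hi => p.parts_pos (hpt ▸ Multiset.mem_add.2 (Or.inr hi)), by omega⟩,
      (hT _).2 hR, Nat.Partition.ext hpt.symm⟩

theorem card_restricted_filter_le_count (P : ℕ → Prop) [DecidablePred P] {n a j : ℕ}
    (ha : 0 < a) (hj : 0 < j) :
    #{p ∈ restricted n P | j ≤ p.parts.count a} =
      if P a ∧ j * a ≤ n then #(restricted (n - j * a) P) else 0 := by
  split_ifs with h
  · refine card_eq_card_of_mem_iff_replicate_add ha (Nat.sub_add_cancel h.2)
      (R := fun t => ∀ i ∈ t, P i) (fun p => ?_) (fun q => by simp [restricted])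
    simp only [restricted, mem_filter, mem_univ, true_and, Multiset.le_count_iff_replicate_le]
    constructor
    · rintro ⟨hP, hle⟩
      exact ⟨p.parts - replicate j a, (add_tsub_cancel_of_le hle).symm,
        fun i hi => hP i (Multiset.mem_of_le tsub_le_self hi)⟩
    · rintro ⟨t, hpt, ht⟩
      rw [hpt]
      refine ⟨fun i hi => ?_, Multiset.le_add_right _ _⟩
      rcases Multiset.mem_add.1 hi with hi | hi
      · exact Multiset.eq_of_mem_replicate hi ▸ h.1
      · exact ht i hi
  · refine Finset.card_eq_zero.2 (filter_eq_empty_iff.2 fun p hp hle => h ⟨?_, ?_⟩)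
    · exact (mem_filter.1 hp).2 a (Multiset.count_pos.1 (by omega))
    · exact mul_le_of_replicate_le_parts (Multiset.le_count_iff_replicate_le.1 hle)

theorem sum_card_parts_restricted (P : ℕ → Prop) [DecidablePred P] (n : ℕ) :
    ∑ p ∈ restricted n P, Multiset.card p.parts =
      ∑ j ∈ Icc 1 n, ∑ a ∈ Icc 1 n,
        if P a ∧ j * a ≤ n then #(restricted (n - j * a) P) else 0 := by
  have hcount (p : n.Partition) (a : ℕ) :
      p.parts.count a = ∑ j ∈ Icc 1 n, if j ≤ p.parts.count a then 1 else 0 := by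
    have hle := p.count_parts_le a
    have : {j ∈ Icc 1 n | j ≤ p.parts.count a} = Icc 1 (p.parts.count a) := by
      ext j
      simp only [mem_filter, mem_Icc]
      omega
    rw [← card_filter, this, Nat.card_Icc, Nat.add_sub_cancel]
  calc ∑ p ∈ restricted n P, Multiset.card p.parts
      = ∑ p ∈ restricted n P, ∑ a ∈ Icc 1 n, ∑ j ∈ Icc 1 n,
          if j ≤ p.parts.count a then 1 else 0 := by
        simp only [card_parts_eq_sum_count, ← hcount]
    _ = ∑ j ∈ Icc 1 n, ∑ a ∈ Icc 1 n, #{p ∈ restricted n P | j ≤ p.parts.count a} := by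
        simp only [card_filter]
        rw [sum_comm, sum_congr rfl fun a _ => sum_comm, sum_comm]
    _ = _ := sum_congr rfl fun j hj => sum_congr rfl fun a ha =>
        card_restricted_filter_le_count P (mem_Icc.1 ha).1 (mem_Icc.1 hj).1

theorem sum_card_parts_distincts (n : ℕ) :
    ∑ p ∈ distincts n, Multiset.card p.parts =
      ∑ b ∈ Icc 1 n, #{p ∈ distincts n | b ∈ p.parts} := by
  calc ∑ p ∈ distincts n, Multiset.card p.parts
      = ∑ p ∈ distincts n, ∑ b ∈ Icc 1 n, if b ∈ p.parts then 1 else 0 :=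
        sum_congr rfl fun p hp => by
          rw [card_parts_eq_sum_count]
          exact sum_congr rfl fun b _ => Multiset.count_eq_of_nodup (mem_filter.1 hp).2
    _ = _ := by
        simp only [card_filter]
        exact sum_comm

theorem card_filter_mem_parts_eq_zero {m b : ℕ} (s : Finset m.Partition) (h : m < b) :
    #{q ∈ s | b ∈ q.parts} = 0 :=
  Finset.card_eq_zero.2 (filter_eq_empty_iff.2 fun _ _ hb => (le_of_mem_parts hb).not_gt h)

theorem card_distincts_eq_card_filter_mem_add {m b : ℕ} (hb : 0 < b) :
    #(distincts m) =
      #{q ∈ distincts m | b ∈ q.parts} + #{q ∈ distincts (m + b) | b ∈ q.parts} := by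
  rw [← card_filter_add_card_filter_not (s := distincts m) (b ∈ ·.parts)]
  congr 1
  symm
  refine card_eq_card_of_mem_iff_replicate_add hb (by rw [one_mul])
    (R := fun t => t.Nodup ∧ b ∉ t) (fun p => ?_) (fun q => by simp [distincts])
  simp only [distincts, mem_filter, mem_univ, true_and, Multiset.replicate_one,
    Multiset.singleton_add]
  constructor
  · rintro ⟨hnd, hbp⟩
    rw [← Multiset.cons_erase hbp, Multiset.nodup_cons] at hnd
    exact ⟨_, (Multiset.cons_erase hbp).symm, hnd.2, hnd.1⟩
  · rintro ⟨t, hpt, hnd, hbt⟩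
    rw [hpt]
    exact ⟨Multiset.nodup_cons.2 ⟨hbt, hnd⟩, Multiset.mem_cons_self b t⟩

theorem card_filter_even_parts_eq_singleton {n e j : ℕ} (he : 0 < e) (hj : 0 < j) :
    #{p : n.Partition | {i ∈ p.parts.toFinset | 2 ∣ i} = {e} ∧ p.parts.count e = j} =
      if Even e ∧ j * e ≤ n then #(odds (n - j * e)) else 0 := by
  split_ifs with h
  · refine card_eq_card_of_mem_iff_replicate_add he (Nat.sub_add_cancel h.2)
      (R := fun t => ∀ i ∈ t, ¬Even i) (fun p => ?_) (fun q => by simp [odds, restricted])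
    simp only [mem_filter, mem_univ, true_and]
    constructor
    · rintro ⟨hev, rfl⟩
      refine ⟨p.parts.filter (· ≠ e), ?_, fun i hi hi2 => ?_⟩
      · rw [← Multiset.filter_eq', Multiset.filter_add_not]
      · obtain ⟨hip, hie⟩ := Multiset.mem_filter.1 hi
        have : i ∈ {i ∈ p.parts.toFinset | 2 ∣ i} := by simp [hip, hi2.two_dvd]
        exact hie (by simpa [hev] using this)
    · rintro ⟨t, hpt, ht⟩
      have het : e ∉ t := fun het => ht e het h.1
      refine ⟨?_, by simp [hpt, Multiset.count_eq_zero.2 het]⟩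
      ext i
      simp only [hpt, mem_filter, Multiset.mem_toFinset, Multiset.mem_add,
        Multiset.mem_replicate, mem_singleton]
      constructor
      · rintro ⟨⟨-, rfl⟩ | hit, hi2⟩
        · rfl
        · exact absurd (even_iff_two_dvd.2 hi2) (ht i hit)
      · rintro rfl
        exact ⟨Or.inl ⟨hj.ne', rfl⟩, h.1.two_dvd⟩
  · refine Finset.card_eq_zero.2 (filter_eq_empty_iff.2 fun p _ ⟨hev, hc⟩ => h ⟨?_, ?_⟩)
    · have : e ∈ {i ∈ p.parts.toFinset | 2 ∣ i} := hev ▸ mem_singleton_self e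
      exact even_iff_two_dvd.2 (mem_filter.1 this).2
    · exact mul_le_of_replicate_le_parts (Multiset.le_count_iff_replicate_le.1 hc.ge)

theorem card_filter_repeated_parts_eq_singleton {n b j : ℕ} (hb : 0 < b) (hj : 0 < j) :
    #{p : n.Partition |
        {i ∈ p.parts.toFinset | 2 ≤ p.parts.count i} = {b} ∧ p.parts.count b - 1 = j} =
      if j * b ≤ n then #{q ∈ distincts (n - j * b) | b ∈ q.parts} else 0 := by
  have hcount {p : n.Partition} (hrep : {i ∈ p.parts.toFinset | 2 ≤ p.parts.count i} = {b}) :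
      2 ≤ p.parts.count b ∧ ∀ i ≠ b, p.parts.count i ≤ 1 := by
    have hbrep : b ∈ {i ∈ p.parts.toFinset | 2 ≤ p.parts.count i} :=
      hrep ▸ mem_singleton_self b
    refine ⟨(mem_filter.1 hbrep).2, fun i hib => ?_⟩
    by_contra! hi
    have : i ∈ {i ∈ p.parts.toFinset | 2 ≤ p.parts.count i} :=
      mem_filter.2 ⟨Multiset.mem_toFinset.2 (Multiset.count_pos.1 (by omega)), hi⟩
    exact hib (by simpa [hrep] using this)
  split_ifs with h
  · refine card_eq_card_of_mem_iff_replicate_add hb (Nat.sub_add_cancel h)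
      (R := fun t => t.Nodup ∧ b ∈ t) (fun p => ?_) (fun q => by simp [distincts])
    simp only [mem_filter, mem_univ, true_and]
    constructor
    · rintro ⟨hrep, hc⟩
      obtain ⟨hb2, hle1⟩ := hcount hrep
      have hle : replicate j b ≤ p.parts := Multiset.le_count_iff_replicate_le.1 (by omega)
      refine ⟨p.parts - replicate j b, (add_tsub_cancel_of_le hle).symm,
        Multiset.nodup_iff_count_le_one.2 fun i => ?_, ?_⟩
      · rw [Multiset.count_sub, Multiset.count_replicate]
        split_ifs with hib
        · subst hib
          omega
        · exact (Nat.sub_le _ _).trans (hle1 i (Ne.symm hib))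
      · rw [← Multiset.count_pos, Multiset.count_sub, Multiset.count_replicate_self]
        omega
    · rintro ⟨t, hpt, hnd, hbt⟩
      have hc (i : ℕ) :
          p.parts.count i = (if b = i then j else 0) + if i ∈ t then 1 else 0 := by
        rw [hpt, Multiset.count_add, Multiset.count_replicate, Multiset.count_eq_of_nodup hnd]
      refine ⟨?_, by simp [hc, hbt]⟩
      ext i
      simp only [mem_filter, Multiset.mem_toFinset, mem_singleton, hc]
      constructor
      · rintro ⟨-, hi⟩
        by_contra hib
        simp only [Ne.symm hib, if_false] at hi
        split_ifs at hi <;> omega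
      · rintro rfl
        simp only [hpt, hbt, if_true]
        exact ⟨Multiset.mem_add.2 (Or.inr hbt), by omega⟩
  · refine Finset.card_eq_zero.2 (filter_eq_empty_iff.2 fun p _ ⟨hrep, hc⟩ => h ?_)
    have hb2 := (hcount hrep).1
    exact mul_le_of_replicate_le_parts
      (Multiset.le_count_iff_replicate_le.1 (show j ≤ p.parts.count b by omega))

end Nat.Partition

open Nat.Partition

theorem setO_zero_two (n : ℕ) : setO 0 2 n = odds n := by
  ext p
  simp [setO, odds, restricted, filter_eq_empty_iff, even_iff_two_dvd]

theorem setD_zero_two (n : ℕ) : setD 0 2 n = distincts n := by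
  ext p
  simp only [setD, distincts, mem_filter, mem_univ, true_and, card_eq_zero,
    filter_eq_empty_iff, Multiset.mem_toFinset, not_le, Multiset.nodup_iff_count_le_one]
  refine ⟨fun h i => ?_, fun h i _ => Nat.lt_succ_of_le (h i)⟩
  by_cases hi : i ∈ p.parts
  · exact Nat.le_of_lt_succ (h hi)
  · simp [Multiset.count_eq_zero.2 hi]

theorem card_setO_one_two (n : ℕ) :
    #(setO 1 2 n) = ∑ j ∈ Icc 1 n, multipleSum Even (fun m => #(odds m)) j n := by
  calc #(setO 1 2 n)
      = ∑ e ∈ Icc 1 n, ∑ j ∈ Icc 1 n,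
          #{p : n.Partition |
            {i ∈ p.parts.toFinset | 2 ∣ i} = {e} ∧ p.parts.count e = j} := by
        rw [setO, card_filter_card_eq_one_eq_sum _ _ _
          fun p _ => (filter_subset _ _).trans p.toFinset_parts_subset_Icc]
        refine sum_congr rfl fun e _ => ?_
        rw [card_eq_sum_card_fiberwise (f := fun p => p.parts.count e) (t := Icc 1 n)]
        · simp only [filter_filter]
        · intro p hp
          have hep : e ∈ {i ∈ p.parts.toFinset | 2 ∣ i} :=
            (mem_filter.1 hp).2 ▸ mem_singleton_self e
          exact mem_Icc.2 ⟨Multiset.count_pos.2 (by simpa using (mem_filter.1 hep).1),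
            p.count_parts_le e⟩
    _ = ∑ e ∈ Icc 1 n, ∑ j ∈ Icc 1 n,
          if Even e ∧ j * e ≤ n then #(odds (n - j * e)) else 0 :=
        sum_congr rfl fun e he => sum_congr rfl fun j hj =>
          card_filter_even_parts_eq_singleton (mem_Icc.1 he).1 (mem_Icc.1 hj).1
    _ = _ := by
        rw [sum_comm]
        simp only [multipleSum, sum_filter]

theorem card_setD_one_two (n : ℕ) :
    #(setD 1 2 n) =
      ∑ b ∈ Icc 1 n,
        multipleSum (fun _ => True) (fun m => #{q ∈ distincts m | b ∈ q.parts}) b n := by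
  rw [setD, card_filter_card_eq_one_eq_sum _ _ _
    fun p _ => (filter_subset _ _).trans p.toFinset_parts_subset_Icc]
  refine sum_congr rfl fun b hb => ?_
  calc #{p : n.Partition | {i ∈ p.parts.toFinset | 2 ≤ p.parts.count i} = {b}}
      = ∑ j ∈ Icc 1 n, #{p : n.Partition |
          {i ∈ p.parts.toFinset | 2 ≤ p.parts.count i} = {b} ∧ p.parts.count b - 1 = j} := by
        rw [card_eq_sum_card_fiberwise (f := fun p => p.parts.count b - 1) (t := Icc 1 n)]
        · simp only [filter_filter]
        · intro p hp
          have hbp : b ∈ {i ∈ p.parts.toFinset | 2 ≤ p.parts.count i} :=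
            (mem_filter.1 hp).2 ▸ mem_singleton_self b
          have := (mem_filter.1 hbp).2
          have := p.count_parts_le b
          show p.parts.count b - 1 ∈ Icc 1 n
          exact mem_Icc.2 ⟨by omega, by omega⟩
    _ = ∑ j ∈ Icc 1 n,
          if j * b ≤ n then #{q ∈ distincts (n - j * b) | b ∈ q.parts} else 0 :=
        sum_congr rfl fun j hj =>
          card_filter_repeated_parts_eq_singleton (mem_Icc.1 hb).1 (mem_Icc.1 hj).1
    _ = _ := by
        simp only [multipleSum, sum_filter, true_and]
        exact sum_congr rfl fun j _ => by rw [mul_comm j b]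

theorem sum_card_parts_odds (n : ℕ) :
    ∑ p ∈ odds n, Multiset.card p.parts =
      ∑ j ∈ Icc 1 n, multipleSum Odd (fun m => #(odds m)) j n := by
  simp only [odds, sum_card_parts_restricted, multipleSum, sum_filter, Nat.not_even_iff_odd]

theorem sum_card_parts_odds_eq_add_card_setO (n : ℕ) :
    ∑ p ∈ odds n, Multiset.card p.parts =
      ∑ p ∈ distincts n, Multiset.card p.parts + #(setO 1 2 n) := by
  rw [sum_card_parts_odds, card_setO_one_two, sum_card_parts_distincts, ← sum_add_distrib]
  refine sum_congr rfl fun b hb => ?_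
  have hb0 : 0 < b := (mem_Icc.1 hb).1
  have hsplit (m : ℕ) := card_distincts_eq_card_filter_mem_add (m := m) hb0
  have hvanish (m : ℕ) (hm : m < b) := card_filter_mem_parts_eq_zero (distincts m) hm
  simp only [card_odds_eq_card_distincts]
  exact multipleSum_odd_eq_add_multipleSum_even hb0 hsplit hvanish n

theorem card_setD_one_two_eq_card_setO_one_two (n : ℕ) : #(setD 1 2 n) = #(setO 1 2 n) := by
  rw [card_setD_one_two, card_setO_one_two]
  refine sum_congr rfl fun b hb => ?_
  have hb0 : 0 < b := (mem_Icc.1 hb).1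
  have hsplit (m : ℕ) := card_distincts_eq_card_filter_mem_add (m := m) hb0
  have hvanish (m : ℕ) (hm : m < b) := card_filter_mem_parts_eq_zero (distincts m) hm
  simp only [card_odds_eq_card_distincts]
  exact multipleSum_true_eq_multipleSum_even hb0 hsplit hvanish n

/-- Andrews' theorem (Beck's conjecture): the difference between the total number of parts
in all partitions of `n` into odd parts and the total number of parts in all partitions of
`n` into distinct parts equals `|O_{1,2}(n)|` and also equals `|D_{1,2}(n)|`. -/
theorem andrews_beck (n : ℕ) :
    bDiff 0 2 n = ((setO 1 2 n).card : ℤ) ∧ bDiff 0 2 n = ((setD 1 2 n).card : ℤ) := by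
  have hO : bDiff 0 2 n = #(setO 1 2 n) := by
    rw [bDiff, setO_zero_two, setD_zero_two]
    simp only [numParts]
    rw [← Nat.cast_sum, ← Nat.cast_sum, sum_card_parts_odds_eq_add_card_setO]
    push_cast
    ring
  exact ⟨hO, by rw [hO, card_setD_one_two_eq_card_setO_one_two]⟩
end

section
/- For all non-negative integers n, j and all integers r ≥ 2, b_{j,r}(n) = (r−1)·((j+1)·|O_{j+1,r}(n)| − j·|O_{j,r}(n)|), where the equality holds in the integers. -/
open Finset

/-!
Glaisher's map `φ` splits each part `b` divisible by `r` into `r` copies of `b / r`, and trades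
the `m` copies of a part `i` not divisible by `r` for `d_k` copies of `i * r ^ k`, where the
`d_k` are the base-`r` digits of `m`. The multiplicity of `a` in `φ λ` is then `r * m_{ra}(λ)`
plus a digit, so `a` is repeated at least `r` times in `φ λ` iff `r * a` is a part of `λ`, and the
counts of `φ λ` determine `λ`. Hence `φ` maps `O_{j,r}(n)` bijectively onto `D_{j,r}(n)`, and
Legendre's identity `m - s_r(m) = (r - 1) ∑_k ⌊m / r ^ (k + 1)⌋` gives
`ℓ(λ) - ℓ(φ λ) = (r - 1) (T(λ) - M(λ))`, where `M(λ)` (`numPartsDvd`) is the number of parts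
divisible by `r` and `T(λ)` (`numExchanges`) the number of triples `(i, k, c)` with `r ∤ i` and
`1 ≤ c`, `c * r ^ (k + 1) ≤ m_i(λ)`.

Trading those `c * r ^ (k + 1)` copies of `i` for `c` copies of `a = i * r ^ (k + 1)` turns the
triples over `O_{j,r}(n)` into the triples `(μ, a, c)` with `r ∣ a` and `1 ≤ c ≤ m_a(μ)`, where
`μ ∈ O_{j+1,r}(n)` if `c = m_a(μ)` (the part `a` is new) and `μ ∈ O_{j,r}(n)` otherwise
(`IsExchangeTarget`). Counting the latter gives
`∑_{O_j} T = (j + 1) |O_{j+1}| + ∑_{O_j} M - j |O_j|`.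
-/

namespace Nat

lemma sum_range_div_pow_mod_mul_pow_add (r m K : ℕ) :
    ∑ k ∈ range K, m / r ^ k % r * r ^ k + r ^ K * (m / r ^ K) = m := by
  induction K with
  | zero => simp
  | succ K ih =>
    have h := Nat.mod_add_div (m / r ^ K) r
    rw [Nat.div_div_eq_div_mul, ← pow_succ] at h
    calc _ = ∑ k ∈ range K, m / r ^ k % r * r ^ k
          + r ^ K * (m / r ^ K % r + r * (m / r ^ (K + 1))) := by
          rw [sum_range_succ, pow_succ]; ring
      _ = m := by rw [h, ih]

lemma eq_of_forall_div_pow_mod_eq {r m m' K : ℕ} (hm : m < r ^ K) (hm' : m' < r ^ K)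
    (h : ∀ k < K, m / r ^ k % r = m' / r ^ k % r) : m = m' := by
  rw [← sum_range_div_pow_mod_mul_pow_add r m K, ← sum_range_div_pow_mod_mul_pow_add r m' K,
    Nat.div_eq_of_lt hm, Nat.div_eq_of_lt hm']
  exact congrArg (· + _) (sum_congr rfl fun k hk => by rw [h k (mem_range.1 hk)])

lemma cast_sub_sum_range_div_pow_mod (r m K : ℕ) :
    (m : ℤ) - ∑ k ∈ range K, (m / r ^ k % r : ℕ) =
      (r - 1) * ∑ k ∈ range K, (m / r ^ (k + 1) : ℕ) + (m / r ^ K : ℕ) := by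
  induction K with
  | zero => simp
  | succ K ih =>
    have h := Nat.mod_add_div (m / r ^ K) r
    rw [Nat.div_div_eq_div_mul, ← pow_succ] at h
    have hZ : ((m / r ^ K % r : ℕ) : ℤ) + r * (m / r ^ (K + 1) : ℕ) = (m / r ^ K : ℕ) := by
      exact_mod_cast h
    rw [sum_range_succ, sum_range_succ]
    push_cast at ih hZ ⊢
    linear_combination ih - hZ

lemma eq_and_eq_of_mul_pow_eq_mul_pow {r b b' k k' : ℕ} (hr : 0 < r) (hb : ¬ r ∣ b)
    (hb' : ¬ r ∣ b') (h : b * r ^ k = b' * r ^ k') : b = b' ∧ k = k' := by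
  wlog hkk : k ≤ k' generalizing b b' k k'
  · exact (this hb' hb h.symm (le_of_not_ge hkk)).imp Eq.symm Eq.symm
  obtain ⟨d, rfl⟩ := Nat.exists_eq_add_of_le hkk
  have hbd : b = b' * r ^ d :=
    Nat.eq_of_mul_eq_mul_right (pow_pos hr k) (by rw [h, pow_add]; ring)
  cases d with
  | zero => simpa using hbd
  | succ d => exact absurd (hbd ▸ dvd_mul_of_dvd_right (dvd_pow_self r d.succ_ne_zero) b') hb

lemma sum_sum_ite_mul_pow_eq {M : Type*} [AddCommMonoid M] {r b₀ k₀ : ℕ} (hr : 0 < r)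
    (hb₀ : ¬ r ∣ b₀) {s t : Finset ℕ} (hs : b₀ ∈ s) (ht : k₀ ∈ t) (f : ℕ → ℕ → M) :
    ∑ b ∈ s with ¬ r ∣ b, ∑ k ∈ t, (if b * r ^ k = b₀ * r ^ k₀ then f b k else 0) =
      f b₀ k₀ := by
  rw [sum_eq_single_of_mem b₀ (mem_filter.2 ⟨hs, hb₀⟩), sum_eq_single_of_mem k₀ ht, if_pos rfl]
  · exact fun k _ hk => if_neg fun h => hk (eq_and_eq_of_mul_pow_eq_mul_pow hr hb₀ hb₀ h).2
  · exact fun b hb hne => sum_eq_zero fun k _ => if_neg fun h =>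
      hne (eq_and_eq_of_mul_pow_eq_mul_pow hr (mem_filter.1 hb).2 hb₀ h).1

lemma sum_not_dvd_sum_range_mul_pow_eq {M : Type*} [AddCommMonoid M] {r n : ℕ}
    (hr : 2 ≤ r) {F : ℕ → M} (hF : ∀ a, n < a → F a = 0) :
    ∑ i ∈ Icc 1 n with ¬ r ∣ i, ∑ k ∈ range n, F (i * r ^ (k + 1)) =
      ∑ a ∈ Icc 1 n with r ∣ a, F a := by
  rw [← sum_product']
  refine sum_bij_ne_zero (fun x _ _ => x.1 * r ^ (x.2 + 1)) ?_ ?_ ?_ fun _ _ _ => rfl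
  · rintro ⟨i, k⟩ hx hF0
    simp only [mem_product, mem_filter, mem_Icc] at hx ⊢
    have hi0 : 0 < i := hx.1.1.1
    refine ⟨⟨Nat.mul_pos hi0 (by positivity), not_lt.1 fun h => hF0 (hF _ h)⟩,
      dvd_mul_of_dvd_right (dvd_pow_self r k.succ_ne_zero) i⟩
  · rintro ⟨i, k⟩ hx - ⟨i', k'⟩ hx' - h
    simp only [mem_product, mem_filter] at hx hx'
    obtain ⟨hi, hk⟩ := eq_and_eq_of_mul_pow_eq_mul_pow (by omega) hx.1.2 hx'.1.2 h
    exact Prod.ext hi (by simpa using hk)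
  · intro a ha hFa
    simp only [mem_filter, mem_Icc] at ha
    obtain ⟨⟨ha1, han⟩, hra⟩ := ha
    obtain ⟨e, i, hi, rfl⟩ := Nat.exists_eq_pow_mul_and_not_dvd (n := a) (by omega) r (by omega)
    have hi0 : 0 < i := Nat.pos_of_ne_zero fun h => hi (h ▸ dvd_zero r)
    obtain ⟨e, rfl⟩ : ∃ e', e = e' + 1 :=
      Nat.exists_eq_succ_of_ne_zero fun h => hi (by simpa [h] using hra)
    have hpow : e + 1 < r ^ (e + 1) := Nat.lt_pow_self (by omega)
    have hle : r ^ (e + 1) ≤ r ^ (e + 1) * i := Nat.le_mul_of_pos_right _ hi0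
    have hile : i ≤ r ^ (e + 1) * i := Nat.le_mul_of_pos_left _ (by positivity)
    refine ⟨(i, e), ?_, by rwa [mul_comm], mul_comm _ _⟩
    simp only [mem_product, mem_filter, mem_Icc, mem_range]
    exact ⟨⟨⟨hi0, by omega⟩, hi⟩, by omega⟩

lemma sum_Icc_card_filter_mul_le_eq_sum_div {ι : Type*} (s : Finset ι) (f : ι → ℕ) {R N : ℕ}
    (hR : 0 < R) (hf : ∀ x ∈ s, f x ≤ N) :
    ∑ c ∈ Icc 1 N, #{x ∈ s | c * R ≤ f x} = ∑ x ∈ s, f x / R := by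
  simp only [card_filter]
  rw [sum_comm]
  refine sum_congr rfl fun x hx => ?_
  have hdiv : f x / R ≤ N := (Nat.div_le_self _ _).trans (hf x hx)
  rw [← card_filter, show {c ∈ Icc 1 N | c * R ≤ f x} = Icc 1 (f x / R) by
    ext c; simp only [mem_filter, mem_Icc, ← Nat.le_div_iff_mul_le hR]; omega]
  simp

lemma card_Icc_filter_le_and_eq_add_ite {m N : ℕ} (hm : m ≤ N) (d j : ℕ) :
    #{c ∈ Icc 1 N | c ≤ m ∧ d = j + if m = c then 1 else 0} =
      (if d = j + 1 ∧ 0 < m then 1 else 0) + if d = j then m - 1 else 0 := by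
  by_cases h1 : d = j + 1
  · rw [show {c ∈ Icc 1 N | c ≤ m ∧ d = j + if m = c then 1 else 0} = Ioc (m - 1) m by
      ext c; simp only [mem_filter, mem_Icc, mem_Ioc]; split_ifs <;> omega]
    simp only [Nat.card_Ioc, h1, true_and, if_neg (by omega : j + 1 ≠ j)]
    split_ifs <;> omega
  · by_cases h0 : d = j
    · rw [show {c ∈ Icc 1 N | c ≤ m ∧ d = j + if m = c then 1 else 0} = Icc 1 (m - 1) by
        ext c; simp only [mem_filter, mem_Icc]; split_ifs <;> omega]
      simp [h0]
    · rw [show {c ∈ Icc 1 N | c ≤ m ∧ d = j + if m = c then 1 else 0} = ∅ by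
        ext c; simp only [mem_filter, mem_Icc, notMem_empty, iff_false]; split_ifs <;> omega]
      simp [h0, h1]

end Nat

namespace Nat.Partition

variable {n : ℕ}

lemma count_eq_zero_of_notMem_Icc (p : n.Partition) {b : ℕ} (hb : b ∉ Icc 1 n) :
    p.parts.count b = 0 :=
  Multiset.count_eq_zero.2 fun h => hb (mem_Icc.2 ⟨p.parts_pos h, le_of_mem_parts h⟩)

lemma sum_Icc_count_mul (p : n.Partition) : ∑ b ∈ Icc 1 n, p.parts.count b * b = n := by
  have hsub : p.parts.toFinset ⊆ Icc 1 n := fun b hb => by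
    rw [Multiset.mem_toFinset] at hb
    exact mem_Icc.2 ⟨p.parts_pos hb, le_of_mem_parts hb⟩
  conv_rhs => rw [← p.parts_sum, sum_multiset_count_of_subset p.parts (Icc 1 n) hsub]
  simp only [smul_eq_mul]

lemma sum_Icc_count (p : n.Partition) : ∑ b ∈ Icc 1 n, p.parts.count b = numParts p :=
  Multiset.sum_count_eq_card fun _ hb => mem_Icc.2 ⟨p.parts_pos hb, le_of_mem_parts hb⟩

lemma count_le (p : n.Partition) {b : ℕ} (hb : 0 < b) : p.parts.count b ≤ n := by
  by_cases hbI : b ∈ Icc 1 n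
  · calc p.parts.count b ≤ p.parts.count b * b := Nat.le_mul_of_pos_right _ hb
      _ ≤ ∑ a ∈ Icc 1 n, p.parts.count a * a :=
        single_le_sum (f := fun a => p.parts.count a * a) (fun _ _ => Nat.zero_le _) hbI
      _ = n := p.sum_Icc_count_mul
  · simp [p.count_eq_zero_of_notMem_Icc hbI]

def glaisherBlock (r K b m : ℕ) : Multiset ℕ :=
  if r ∣ b then Multiset.replicate (r * m) (b / r)
  else ∑ k ∈ range K, Multiset.replicate (m / r ^ k % r) (b * r ^ k)

lemma sum_glaisherBlock {r K b m : ℕ} (hm : m < r ^ K) :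
    (glaisherBlock r K b m).sum = m * b := by
  unfold glaisherBlock
  split_ifs with hb
  · rw [Multiset.sum_replicate, smul_eq_mul, mul_comm r m, mul_assoc, Nat.mul_div_cancel' hb]
  · have h := Nat.sum_range_div_pow_mod_mul_pow_add r m K
    rw [Nat.div_eq_of_lt hm, mul_zero, add_zero] at h
    simp only [Multiset.sum_sum, Multiset.sum_replicate, smul_eq_mul]
    calc _ = (∑ k ∈ range K, m / r ^ k % r * r ^ k) * b := by
          rw [sum_mul]; exact sum_congr rfl fun k _ => by ring
      _ = m * b := by rw [h]

lemma cast_sub_card_glaisherBlock {r K b m : ℕ} (hm : m < r ^ K) :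
    (m : ℤ) - Multiset.card (glaisherBlock r K b m) =
      (r - 1) * if r ∣ b then -(m : ℤ) else ∑ k ∈ range K, (m / r ^ (k + 1) : ℕ) := by
  unfold glaisherBlock
  split_ifs with hb
  · push_cast [Multiset.card_replicate]; ring
  · simp only [Multiset.card_sum, Multiset.card_replicate]
    rw [Nat.cast_sub_sum_range_div_pow_mod, Nat.div_eq_of_lt hm, Nat.cast_zero, add_zero,
      Nat.cast_sum]

-- Multiplicities are at most `n < r ^ n`, so `n` base-`r` digits suffice.
def glaisher {r : ℕ} (hr : 2 ≤ r) (p : n.Partition) : n.Partition where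
  parts := ∑ b ∈ Icc 1 n, glaisherBlock r n b (p.parts.count b)
  parts_pos := by
    intro a ha
    obtain ⟨b, hb, ha⟩ := Multiset.mem_sum.1 ha
    have hb0 : 0 < b := (mem_Icc.1 hb).1
    unfold glaisherBlock at ha
    split_ifs at ha with hrb
    · rw [Multiset.eq_of_mem_replicate ha]
      exact Nat.div_pos (Nat.le_of_dvd hb0 hrb) (by omega)
    · obtain ⟨k, -, hk⟩ := Multiset.mem_sum.1 ha
      rw [Multiset.eq_of_mem_replicate hk]
      positivity
  parts_sum := by
    conv_rhs => rw [← p.sum_Icc_count_mul]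
    rw [Multiset.sum_sum]
    exact sum_congr rfl fun b hb =>
      sum_glaisherBlock ((p.count_le (mem_Icc.1 hb).1).trans_lt (Nat.lt_pow_self (by omega)))

def numPartsDvd (r : ℕ) (p : n.Partition) : ℕ := ∑ b ∈ Icc 1 n with r ∣ b, p.parts.count b

def numExchanges (r : ℕ) (p : n.Partition) : ℕ :=
  ∑ i ∈ Icc 1 n with ¬ r ∣ i, ∑ k ∈ range n, p.parts.count i / r ^ (k + 1)

lemma numParts_sub_numParts_glaisher {r : ℕ} (hr : 2 ≤ r) (p : n.Partition) :
    (numParts p : ℤ) - numParts (glaisher hr p) =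
      (r - 1) * ((numExchanges r p : ℤ) - numPartsDvd r p) := by
  have hterm : ∀ b ∈ Icc 1 n, (p.parts.count b : ℤ) -
      Multiset.card (glaisherBlock r n b (p.parts.count b)) =
        (r - 1) * if r ∣ b then -(p.parts.count b : ℤ)
          else ∑ k ∈ range n, (p.parts.count b / r ^ (k + 1) : ℕ) := fun b hb =>
    cast_sub_card_glaisherBlock
      ((p.count_le (mem_Icc.1 hb).1).trans_lt (Nat.lt_pow_self (by omega)))
  rw [← sum_Icc_count, numParts, glaisher, Multiset.card_sum, Nat.cast_sum, Nat.cast_sum,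
    ← sum_sub_distrib, sum_congr rfl hterm, ← mul_sum, sum_ite, numExchanges, numPartsDvd]
  push_cast
  rw [sum_neg_distrib]
  ring

lemma count_glaisher {r : ℕ} (hr : 2 ≤ r) (p : n.Partition) (a : ℕ) :
    (glaisher hr p).parts.count a = r * p.parts.count (r * a) +
      ∑ b ∈ Icc 1 n with ¬ r ∣ b, ∑ k ∈ range n,
        if b * r ^ k = a then p.parts.count b / r ^ k % r else 0 := by
  simp only [glaisher, Multiset.count_sum']
  rw [← sum_filter_add_sum_filter_not (Icc 1 n) (r ∣ ·)]
  congr 1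
  · have hterm : ∀ b, r ∣ b → (glaisherBlock r n b (p.parts.count b)).count a =
        if r * a = b then r * p.parts.count b else 0 := by
      rintro b ⟨c, rfl⟩
      rw [glaisherBlock, if_pos (dvd_mul_right r c), Multiset.count_replicate,
        Nat.mul_div_cancel_left c (by omega)]
      simp only [(mul_right_injective₀ (show r ≠ 0 by omega)).eq_iff, eq_comm]
    rw [sum_congr rfl fun b hb => hterm b (mem_filter.1 hb).2, sum_ite_eq]
    split_ifs with ha
    · rfl
    · rw [p.count_eq_zero_of_notMem_Icc fun h => ha (mem_filter.2 ⟨h, dvd_mul_right r a⟩),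
        mul_zero]
  · refine sum_congr rfl fun b hb => ?_
    rw [glaisherBlock, if_neg (mem_filter.1 hb).2, Multiset.count_sum']
    simp only [Multiset.count_replicate]

lemma count_glaisher_div {r : ℕ} (hr : 2 ≤ r) (p : n.Partition) (a : ℕ) :
    (glaisher hr p).parts.count a / r = p.parts.count (r * a) := by
  have hdigits : ∑ b ∈ Icc 1 n with ¬ r ∣ b, ∑ k ∈ range n,
      (if b * r ^ k = a then p.parts.count b / r ^ k % r else 0) < r := by
    by_cases h : ∃ b₀ k₀, ¬ r ∣ b₀ ∧ b₀ ∈ Icc 1 n ∧ k₀ ∈ range n ∧ b₀ * r ^ k₀ = a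
    · obtain ⟨b₀, k₀, hb₀, hs, ht, rfl⟩ := h
      rw [sum_sum_ite_mul_pow_eq (by omega) hb₀ hs ht]
      exact Nat.mod_lt _ (by omega)
    · rw [sum_eq_zero fun b hb => sum_eq_zero fun k hk => if_neg fun hbk =>
        h ⟨b, k, (mem_filter.1 hb).2, (mem_filter.1 hb).1, hk, hbk⟩]
      omega
  rw [count_glaisher, Nat.mul_add_div (by omega), Nat.div_eq_of_lt hdigits, add_zero]

lemma count_glaisher_mod {r : ℕ} (hr : 2 ≤ r) (p : n.Partition) {b k : ℕ} (hb : ¬ r ∣ b)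
    (hk : k < n) :
    (glaisher hr p).parts.count (b * r ^ k) % r = p.parts.count b / r ^ k % r := by
  by_cases hbI : b ∈ Icc 1 n
  · rw [count_glaisher, sum_sum_ite_mul_pow_eq (by omega) hb hbI (mem_range.2 hk),
      Nat.mul_add_mod, Nat.mod_mod]
  · have hb0 : 0 < b := Nat.pos_of_ne_zero fun h => hb (h ▸ dvd_zero r)
    have hbn : n < b := by simp only [mem_Icc, not_and, not_le] at hbI; exact hbI hb0
    have hbk : b * r ^ k ∉ Icc 1 n := fun h =>
      absurd ((Nat.le_mul_of_pos_right b (by positivity)).trans (mem_Icc.1 h).2) (by omega)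
    rw [(glaisher hr p).count_eq_zero_of_notMem_Icc hbk, p.count_eq_zero_of_notMem_Icc hbI,
      Nat.zero_div, Nat.zero_mod]

lemma glaisher_injective {r : ℕ} (hr : 2 ≤ r) :
    Function.Injective (glaisher (n := n) hr) := by
  intro p q h
  refine Nat.Partition.ext (Multiset.ext.2 fun b => ?_)
  by_cases hb : r ∣ b
  · obtain ⟨a, rfl⟩ := hb
    rw [← count_glaisher_div hr p a, ← count_glaisher_div hr q a, h]
  · have hb0 : 0 < b := Nat.pos_of_ne_zero fun h => hb (h ▸ dvd_zero r)
    exact Nat.eq_of_forall_div_pow_mod_eq ((p.count_le hb0).trans_lt (Nat.lt_pow_self hr))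
      ((q.count_le hb0).trans_lt (Nat.lt_pow_self hr)) fun k hk => by
        rw [← count_glaisher_mod hr p hb hk, ← count_glaisher_mod hr q hb hk, h]

lemma le_count_glaisher_iff {r : ℕ} (hr : 2 ≤ r) (p : n.Partition) (a : ℕ) :
    r ≤ (glaisher hr p).parts.count a ↔ r * a ∈ p.parts := by
  rw [← Multiset.count_pos, ← count_glaisher_div hr p a, Nat.div_pos_iff]
  omega

lemma card_filter_le_count_glaisher {r : ℕ} (hr : 2 ≤ r) (p : n.Partition) :
    #{a ∈ (glaisher hr p).parts.toFinset | r ≤ (glaisher hr p).parts.count a} =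
      #{b ∈ p.parts.toFinset | r ∣ b} := by
  refine card_nbij' (r * ·) (· / r) ?_ ?_ ?_ ?_
  · intro a ha
    simp only [mem_coe, mem_filter, Multiset.mem_toFinset] at ha ⊢
    exact ⟨(le_count_glaisher_iff hr p a).1 ha.2, dvd_mul_right r a⟩
  · intro b hb
    simp only [mem_coe, mem_filter, Multiset.mem_toFinset] at hb ⊢
    have h := (le_count_glaisher_iff hr p (b / r)).2
      (by rw [Nat.mul_div_cancel' hb.2]; exact hb.1)
    exact ⟨Multiset.count_pos.1 (by omega), h⟩
  · intro a _
    exact Nat.mul_div_cancel_left a (by omega)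
  · intro b hb
    exact Nat.mul_div_cancel' (mem_filter.1 hb).2

lemma glaisher_mem_setD_iff {r : ℕ} (hr : 2 ≤ r) (p : n.Partition) (j : ℕ) :
    glaisher hr p ∈ setD j r n ↔ p ∈ setO j r n := by
  simp only [setD, setO, mem_filter, mem_univ, true_and]
  rw [card_filter_le_count_glaisher]

lemma image_glaisher_setO {r : ℕ} (hr : 2 ≤ r) (j : ℕ) :
    (setO j r n).image (glaisher hr) = setD j r n := by
  ext q
  obtain ⟨p, rfl⟩ := (Finite.injective_iff_surjective.1 (glaisher_injective (n := n) hr)) q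
  rw [(glaisher_injective hr).mem_finset_image, glaisher_mem_setD_iff]

lemma sum_setD_eq_sum_setO_glaisher {M : Type*} [AddCommMonoid M] {r : ℕ} (hr : 2 ≤ r)
    (j : ℕ) (f : n.Partition → M) :
    ∑ q ∈ setD j r n, f q = ∑ p ∈ setO j r n, f (glaisher hr p) := by
  rw [← image_glaisher_setO hr j, sum_image fun p _ q _ h => glaisher_injective hr h]

def exchange (p : n.Partition) {x y cx cy : ℕ} (hle : cx ≤ p.parts.count x)
    (hw : cx * x = cy * y) (hy : 0 < y) : n.Partition where
  parts := p.parts - Multiset.replicate cx x + Multiset.replicate cy y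
  parts_pos := by
    intro a ha
    rcases Multiset.mem_add.1 ha with ha | ha
    · exact p.parts_pos (Multiset.mem_of_le tsub_le_self ha)
    · rw [Multiset.eq_of_mem_replicate ha]; exact hy
  parts_sum := by
    have h := congrArg Multiset.sum
      (tsub_add_cancel_of_le (Multiset.le_count_iff_replicate_le.1 hle))
    rw [Multiset.sum_add, Multiset.sum_replicate, smul_eq_mul, p.parts_sum] at h
    rw [Multiset.sum_add, Multiset.sum_replicate, smul_eq_mul, ← hw]
    omega

lemma count_exchange (p : n.Partition) {x y cx cy : ℕ} (hle : cx ≤ p.parts.count x)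
    (hw : cx * x = cy * y) (hy : 0 < y) (b : ℕ) :
    (p.exchange hle hw hy).parts.count b =
      p.parts.count b - (if b = x then cx else 0) + if b = y then cy else 0 := by
  simp only [exchange, Multiset.count_add, Multiset.count_sub, Multiset.count_replicate, eq_comm]

lemma exchange_exchange (p : n.Partition) {x y cx cy : ℕ} (hle : cx ≤ p.parts.count x)
    (hw : cx * x = cy * y) (hy : 0 < y) (hle' : cy ≤ (p.exchange hle hw hy).parts.count y)
    (hx : 0 < x) : (p.exchange hle hw hy).exchange hle' hw.symm hx = p := by
  refine Nat.Partition.ext ?_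
  simp only [exchange]
  rw [add_tsub_cancel_right, tsub_add_cancel_of_le (Multiset.le_count_iff_replicate_le.1 hle)]

def numDistinctPartsDvd (r : ℕ) (p : n.Partition) : ℕ := #{b ∈ p.parts.toFinset | r ∣ b}

lemma numDistinctPartsDvd_exchange {r : ℕ} (p : n.Partition) {x y cx cy : ℕ}
    (hle : cx ≤ p.parts.count x) (hw : cx * x = cy * y) (hy : 0 < y) (hx : ¬ r ∣ x)
    (hry : r ∣ y) (hcy : 0 < cy) :
    numDistinctPartsDvd r (p.exchange hle hw hy) =
      numDistinctPartsDvd r p + if p.parts.count y = 0 then 1 else 0 := by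
  have hset : {b ∈ (p.exchange hle hw hy).parts.toFinset | r ∣ b} =
      insert y {b ∈ p.parts.toFinset | r ∣ b} := by
    ext b
    simp only [mem_insert, mem_filter, Multiset.mem_toFinset, ← Multiset.count_pos,
      count_exchange]
    by_cases hby : b = y
    · subst hby; simp [hry, hcy]
    · have hbx : r ∣ b → b ≠ x := fun hb h => hx (h ▸ hb)
      by_cases hb : r ∣ b <;> simp [hby, hb, hbx]
  rw [numDistinctPartsDvd, numDistinctPartsDvd, hset, card_insert_eq_ite]
  simp only [mem_filter, Multiset.mem_toFinset, ← Multiset.count_pos, hry, and_true]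
  split_ifs <;> omega

abbrev IsExchangeTarget (r j a c : ℕ) (q : n.Partition) : Prop :=
  c ≤ q.parts.count a ∧ numDistinctPartsDvd r q = j + if q.parts.count a = c then 1 else 0

lemma card_exchangeable_eq_card_isExchangeTarget {r : ℕ} (hr : 0 < r) {i : ℕ} (hi : ¬ r ∣ i)
    (k c j : ℕ) (hc : 0 < c) :
    #{p ∈ setO j r n | c * r ^ (k + 1) ≤ p.parts.count i} =
      #{q : n.Partition | IsExchangeTarget r j (i * r ^ (k + 1)) c q} := by
  set a := i * r ^ (k + 1)
  have hi0 : 0 < i := Nat.pos_of_ne_zero fun h => hi (h ▸ dvd_zero r)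
  have ha : 0 < a := by positivity
  have hra : r ∣ a := dvd_mul_of_dvd_right (dvd_pow_self r k.succ_ne_zero) i
  have hia : i ≠ a := fun h => hi (h ▸ hra)
  have hw : c * r ^ (k + 1) * i = c * a := by ring
  refine card_bij' (fun p hp => p.exchange (mem_filter.1 hp).2 hw ha)
    (fun q hq => q.exchange (mem_filter.1 hq).2.1 hw.symm hi0) ?_ ?_ ?_ ?_
  · intro p hp
    obtain ⟨hpO, hle⟩ := mem_filter.1 hp
    have hcount := p.count_exchange hle hw ha a
    rw [if_neg hia.symm, if_pos rfl, Nat.sub_zero] at hcount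
    simp only [mem_filter, mem_univ, true_and]
    refine ⟨by omega, ?_⟩
    rw [numDistinctPartsDvd_exchange p hle hw ha hi hra hc, hcount]
    rw [setO, mem_filter] at hpO
    simp only [numDistinctPartsDvd, hpO.2]
    split_ifs <;> omega
  · intro q hq
    obtain ⟨hle, hqO⟩ := (mem_filter.1 hq).2
    have hcount := q.count_exchange hle hw.symm hi0
    have hpi := hcount i
    have hpa := hcount a
    rw [if_neg hia, if_pos rfl] at hpi
    rw [if_pos rfl, if_neg hia.symm] at hpa
    have hle' : c * r ^ (k + 1) ≤ (q.exchange hle hw.symm hi0).parts.count i := by omega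
    have hD := numDistinctPartsDvd_exchange _ hle' hw ha hi hra hc
    rw [q.exchange_exchange hle hw.symm hi0 hle' ha, hqO] at hD
    simp only [setO, mem_filter, mem_univ, true_and]
    refine ⟨?_, hle'⟩
    change numDistinctPartsDvd r _ = j
    split_ifs at hD <;> omega
  · intro p hp
    exact p.exchange_exchange _ hw ha _ hi0
  · intro q hq
    exact q.exchange_exchange _ hw.symm hi0 _ ha

lemma numDistinctPartsDvd_eq_sum (r : ℕ) (q : n.Partition) :
    numDistinctPartsDvd r q =
      ∑ a ∈ Icc 1 n with r ∣ a, if 0 < q.parts.count a then 1 else 0 := by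
  rw [← card_filter, filter_filter, numDistinctPartsDvd]
  congr 1
  ext a
  simp only [mem_filter, Multiset.mem_toFinset, Multiset.count_pos, mem_Icc]
  exact ⟨fun h => ⟨⟨q.parts_pos h.1, le_of_mem_parts h.1⟩, h.2, h.1⟩,
    fun h => ⟨h.2.2, h.2.1⟩⟩

lemma sum_card_isExchangeTarget_add (r j : ℕ) (q : n.Partition) :
    ∑ a ∈ Icc 1 n with r ∣ a, #{c ∈ Icc 1 n | IsExchangeTarget r j a c q} +
      (if numDistinctPartsDvd r q = j then j else 0) =
    (if numDistinctPartsDvd r q = j + 1 then j + 1 else 0) +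
      if numDistinctPartsDvd r q = j then numPartsDvd r q else 0 := by
  have hcount : ∀ a ∈ Icc 1 n, q.parts.count a ≤ n := fun a ha => q.count_le (mem_Icc.1 ha).1
  rw [sum_congr rfl fun a ha => card_Icc_filter_le_and_eq_add_ite
    (hcount a (mem_filter.1 ha).1) _ _, sum_add_distrib]
  have hj : j ≠ j + 1 := by omega
  by_cases h1 : numDistinctPartsDvd r q = j + 1
  · have h := numDistinctPartsDvd_eq_sum r q
    simp only [h1, true_and, if_true, hj.symm, if_false, sum_const_zero, add_zero] at h ⊢
    exact h.symm
  · by_cases h0 : numDistinctPartsDvd r q = j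
    · have h := numDistinctPartsDvd_eq_sum r q
      have hsplit : ∑ a ∈ Icc 1 n with r ∣ a, (q.parts.count a - 1) +
          ∑ a ∈ Icc 1 n with r ∣ a, (if 0 < q.parts.count a then 1 else 0) =
            numPartsDvd r q := by
        rw [← sum_add_distrib, numPartsDvd]
        exact sum_congr rfl fun a _ => by split_ifs <;> omega
      simp only [h0, hj, false_and, if_false, if_true, sum_const_zero, zero_add] at h ⊢
      omega
    · simp [h0, h1]

lemma sum_numExchanges_eq {r : ℕ} (hr : 2 ≤ r) (j : ℕ) :
    ∑ p ∈ setO j r n, numExchanges r p =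
      ∑ a ∈ Icc 1 n with r ∣ a, ∑ c ∈ Icc 1 n, #{q : n.Partition | IsExchangeTarget r j a c q} := by
  calc ∑ p ∈ setO j r n, numExchanges r p
      = ∑ i ∈ Icc 1 n with ¬ r ∣ i, ∑ k ∈ range n, ∑ p ∈ setO j r n,
          p.parts.count i / r ^ (k + 1) := by
        unfold numExchanges
        rw [sum_comm]
        exact sum_congr rfl fun i _ => sum_comm
    _ = ∑ i ∈ Icc 1 n with ¬ r ∣ i, ∑ k ∈ range n, ∑ c ∈ Icc 1 n,
          #{p ∈ setO j r n | c * r ^ (k + 1) ≤ p.parts.count i} := by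
        refine sum_congr rfl fun i hi => sum_congr rfl fun k _ => ?_
        exact (sum_Icc_card_filter_mul_le_eq_sum_div _ _ (by positivity)
          fun p _ => p.count_le (mem_Icc.1 (mem_filter.1 hi).1).1).symm
    _ = ∑ i ∈ Icc 1 n with ¬ r ∣ i, ∑ k ∈ range n, ∑ c ∈ Icc 1 n,
          #{q : n.Partition | IsExchangeTarget r j (i * r ^ (k + 1)) c q} := by
        refine sum_congr rfl fun i hi => sum_congr rfl fun k _ => sum_congr rfl fun c hc => ?_
        exact card_exchangeable_eq_card_isExchangeTarget (by omega) (mem_filter.1 hi).2 k c j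
          (mem_Icc.1 hc).1
    _ = _ := by
        refine sum_not_dvd_sum_range_mul_pow_eq hr (F := fun a => ∑ c ∈ Icc 1 n,
          #{q : n.Partition | IsExchangeTarget r j a c q}) fun a ha => sum_eq_zero fun c hc => ?_
        rw [Finset.card_eq_zero, filter_eq_empty_iff]
        rintro q - ⟨hle, -⟩
        have := (mem_Icc.1 hc).1
        rw [q.count_eq_zero_of_notMem_Icc fun h => by simp at h; omega] at hle
        omega

lemma sum_numExchanges_add {r : ℕ} (hr : 2 ≤ r) (j : ℕ) :
    ∑ p ∈ setO j r n, numExchanges r p + j * #(setO j r n) =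
      (j + 1) * #(setO (j + 1) r n) + ∑ p ∈ setO j r n, numPartsDvd r p := by
  have hsetO : ∀ i, setO i r n = univ.filter (numDistinctPartsDvd r · = i) := fun _ => rfl
  have hswap : ∑ a ∈ Icc 1 n with r ∣ a, ∑ c ∈ Icc 1 n, #{q : n.Partition |
        IsExchangeTarget r j a c q} =
      ∑ q : n.Partition, ∑ a ∈ Icc 1 n with r ∣ a, #{c ∈ Icc 1 n | IsExchangeTarget r j a c q} := by
    simp only [card_filter]
    exact (sum_congr rfl fun _ _ => sum_comm).trans sum_comm
  have h := sum_congr rfl fun (q : n.Partition) (_ : q ∈ univ) =>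
    sum_card_isExchangeTarget_add r j q
  rw [sum_add_distrib, sum_add_distrib, ← hswap, ← sum_numExchanges_eq hr] at h
  simp only [← sum_filter, ← hsetO, sum_const, smul_eq_mul] at h
  linarith

end Nat.Partition

open Nat.Partition

/-- `b_{j,r}(n) = (r-1)·((j+1)·|O_{j+1,r}(n)| - j·|O_{j,r}(n)|)`. -/
theorem bDiff_eq_O (n j r : ℕ) (hr : 2 ≤ r) :
    bDiff j r n =
      ((r : ℤ) - 1) *
        (((j : ℤ) + 1) * ((setO (j + 1) r n).card : ℤ) - (j : ℤ) * ((setO j r n).card : ℤ)) := by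
  have hcount : (∑ p ∈ setO j r n, numExchanges r p : ℤ) + j * #(setO j r n) =
      (j + 1) * #(setO (j + 1) r n) + ∑ p ∈ setO j r n, numPartsDvd r p := by
    exact_mod_cast sum_numExchanges_add hr j
  push_cast at hcount
  calc bDiff j r n = ∑ p ∈ setO j r n, ((numParts p : ℤ) - numParts (glaisher hr p)) := by
        rw [bDiff, sum_setD_eq_sum_setO_glaisher hr, sum_sub_distrib]
    _ = (r - 1) * ∑ p ∈ setO j r n, ((numExchanges r p : ℤ) - numPartsDvd r p) := by
        rw [mul_sum]
        exact sum_congr rfl fun p _ => numParts_sub_numParts_glaisher hr p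
    _ = _ := by
        rw [sum_sub_distrib]
        linear_combination (↑r - 1) * hcount
end

section
/- For all non-negative integers n, j and all integers r ≥ 2, the sum over t = 1, 2, …, r−1 of E_{j,r,t}(n) equals b_{j,r}(n). -/
open Finset

/-!
Summing over `t`, the `O`-side of `E_{j,r,t}(n)` contributes `ℓ(λ) - r ℓ₀(λ)` and the `D`-side
`∑ᵢ (mᵢ mod r) = ℓ(μ) - r ∑ᵢ ⌊mᵢ / r⌋`, so the theorem reduces to
`∑_{λ ∈ O_{j,r}(n)} ℓ₀(λ) = ∑_{μ ∈ D_{j,r}(n)} ∑ᵢ ⌊mᵢ(μ) / r⌋`.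

This is Glaisher's bijection: a part `r a` of multiplicity `m` becomes `r m` parts `a`, and a part
`i` prime to `r` of multiplicity `m = ∑ dₖ rᵏ` becomes `dₖ` parts `rᵏ i`. Since `r ^ k * i` with
`¬ r ∣ i` determines `k` and `i`, the multiplicity of `a` in the image is `r m_{ra} + d` with a
single digit `d < r`. Its quotient by `r` recovers the parts divisible by `r` and its remainder the
digits of the other multiplicities, so the map is injective, hence bijective on partitions of `n`;
it sends the `j` distinct parts divisible by `r` to the `j` parts repeated at least `r` times, and
`ℓ₀(λ)` to `∑ᵢ ⌊mᵢ / r⌋`.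
-/

namespace Glaisher

variable {r : ℕ}

theorem sum_range_pow_mul_div_pow_mod (hr : 1 < r) {c K : ℕ} (hc : c < r ^ K) :
    ∑ k ∈ range K, r ^ k * (c / r ^ k % r) = c := by
  induction K generalizing c with
  | zero => simp_all
  | succ K ih =>
    have hcr : c / r < r ^ K := by
      rw [Nat.div_lt_iff_lt_mul (by omega), ← pow_succ]
      exact hc
    have hshift : ∀ k,
        r ^ (k + 1) * (c / r ^ (k + 1) % r) = r * (r ^ k * (c / r / r ^ k % r)) := by
      intro k
      rw [Nat.div_div_eq_div_mul, ← pow_succ']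
      ring
    rw [sum_range_succ', Finset.sum_congr rfl fun k _ => hshift k, ← Finset.mul_sum, ih hcr]
    simpa using Nat.div_add_mod c r

theorem eq_of_forall_div_pow_mod_eq (hr : 1 < r) {a b : ℕ}
    (h : ∀ k, a / r ^ k % r = b / r ^ k % r) : a = b := by
  have ha : a < r ^ (a + b) :=
    (Nat.lt_pow_self hr).trans_le (Nat.pow_le_pow_right (by omega) (by omega))
  have hb : b < r ^ (a + b) :=
    (Nat.lt_pow_self hr).trans_le (Nat.pow_le_pow_right (by omega) (by omega))
  calc a = ∑ k ∈ range (a + b), r ^ k * (a / r ^ k % r) :=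
        (sum_range_pow_mul_div_pow_mod hr ha).symm
    _ = ∑ k ∈ range (a + b), r ^ k * (b / r ^ k % r) := by simp only [h]
    _ = b := sum_range_pow_mul_div_pow_mod hr hb

theorem eq_and_eq_of_pow_mul_eq_pow_mul (hr : r ≠ 0) {k k' i i' : ℕ} (hi : ¬r ∣ i) (hi' : ¬r ∣ i')
    (h : r ^ k * i = r ^ k' * i') : k = k' ∧ i = i' := by
  have hn : r ^ k * i ≠ 0 := mul_ne_zero (pow_ne_zero k hr) (by rintro rfl; exact hi (dvd_zero r))
  simpa using (Nat.maxPowDvdDiv_of_pow_mul_eq hn rfl hi).symm.trans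
    (Nat.maxPowDvdDiv_of_pow_mul_eq hn h.symm hi')

def divParts (r : ℕ) (s : Multiset ℕ) : Multiset ℕ := (s.filter (r ∣ ·)).map (· / r)

def digitParts (r : ℕ) (s : Multiset ℕ) : Multiset ℕ :=
  ∑ i ∈ (s.filter (¬r ∣ ·)).toFinset, ∑ k ∈ range (s.count i),
    Multiset.replicate (s.count i / r ^ k % r) (r ^ k * i)

def glaisher (r : ℕ) (s : Multiset ℕ) : Multiset ℕ := r • divParts r s + digitParts r s

theorem count_divParts (hr : r ≠ 0) (s : Multiset ℕ) (a : ℕ) :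
    (divParts r s).count a = s.count (r * a) := by
  rw [divParts, Multiset.count_map, Multiset.filter_filter, Multiset.count_eq_card_filter_eq]
  congr 1
  refine Multiset.filter_congr fun x _ => ⟨?_, ?_⟩
  · rintro ⟨rfl, hx⟩
    exact Nat.mul_div_cancel' hx
  · rintro rfl
    exact ⟨(Nat.mul_div_cancel_left a (Nat.pos_of_ne_zero hr)).symm, dvd_mul_right r a⟩

theorem sum_nsmul_divParts (r : ℕ) (s : Multiset ℕ) :
    (r • divParts r s).sum = (s.filter (r ∣ ·)).sum := by
  calc (r • divParts r s).sum = ((s.filter (r ∣ ·)).map fun x => r * (x / r)).sum := by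
        rw [Multiset.sum_nsmul, smul_eq_mul, divParts, Multiset.sum_map_mul_left]
    _ = ((s.filter (r ∣ ·)).map fun x => x).sum :=
        congrArg Multiset.sum <|
          Multiset.map_congr rfl fun x hx => Nat.mul_div_cancel' (Multiset.of_mem_filter hx)
    _ = (s.filter (r ∣ ·)).sum := by rw [Multiset.map_id']

theorem sum_digitParts (hr : 1 < r) (s : Multiset ℕ) :
    (digitParts r s).sum = (s.filter (¬r ∣ ·)).sum := by
  rw [digitParts, Multiset.sum_sum, Finset.sum_multiset_count]
  refine Finset.sum_congr rfl fun i hi => ?_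
  rw [Multiset.count_filter_of_pos (Multiset.of_mem_filter (Multiset.mem_toFinset.mp hi)),
    Multiset.sum_sum, smul_eq_mul]
  calc ∑ k ∈ range (s.count i), (Multiset.replicate (s.count i / r ^ k % r) (r ^ k * i)).sum
      = (∑ k ∈ range (s.count i), r ^ k * (s.count i / r ^ k % r)) * i := by
        rw [Finset.sum_mul]
        refine Finset.sum_congr rfl fun k _ => ?_
        rw [Multiset.sum_replicate, smul_eq_mul]
        ring
    _ = s.count i * i := by rw [sum_range_pow_mul_div_pow_mod hr (Nat.lt_pow_self hr)]

theorem count_digitParts_pow_mul (hr : 1 < r) (s : Multiset ℕ) {i : ℕ} (hi : ¬r ∣ i) (k : ℕ) :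
    (digitParts r s).count (r ^ k * i) = s.count i / r ^ k % r := by
  have hr0 : r ≠ 0 := by omega
  simp only [digitParts, Multiset.count_sum']
  rw [Finset.sum_eq_single i]
  · rw [Finset.sum_eq_single k]
    · rw [Multiset.count_replicate, if_pos rfl]
    · intro k' _ hk'
      rw [Multiset.count_replicate,
        if_neg fun h => hk' (eq_and_eq_of_pow_mul_eq_pow_mul hr0 hi hi h).1]
    · intro hk
      have hlt : s.count i < r ^ k :=
        (Nat.lt_pow_self hr).trans_le (Nat.pow_le_pow_right (by omega) (by simpa using hk))
      rw [Nat.div_eq_of_lt hlt, Nat.zero_mod, Multiset.count_replicate]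
      simp
  · intro i' hi' hne
    have hi'r : ¬r ∣ i' := (Multiset.mem_filter.mp (Multiset.mem_toFinset.mp hi')).2
    refine Finset.sum_eq_zero fun k' _ => ?_
    rw [Multiset.count_replicate,
      if_neg fun h => hne (eq_and_eq_of_pow_mul_eq_pow_mul hr0 hi'r hi h).2]
  · intro hiT
    have : s.count i = 0 := Multiset.count_eq_zero.mpr fun h =>
      hiT (Multiset.mem_toFinset.mpr (Multiset.mem_filter.mpr ⟨h, hi⟩))
    simp [this]

theorem count_digitParts_zero (hr : r ≠ 0) (s : Multiset ℕ) : (digitParts r s).count 0 = 0 := by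
  refine Multiset.count_eq_zero.mpr fun h => ?_
  obtain ⟨i, hi, h⟩ := Multiset.mem_sum.mp h
  obtain ⟨k, -, h⟩ := Multiset.mem_sum.mp h
  have hi0 : i ≠ 0 := by
    rintro rfl
    exact Multiset.of_mem_filter (Multiset.mem_toFinset.mp hi) (dvd_zero r)
  exact mul_ne_zero (pow_ne_zero k hr) hi0 (Multiset.mem_replicate.mp h).2.symm

theorem count_digitParts_lt (hr : 1 < r) (s : Multiset ℕ) (a : ℕ) :
    (digitParts r s).count a < r := by
  rcases eq_or_ne a 0 with rfl | ha
  · rw [count_digitParts_zero (by omega)]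
    omega
  · obtain ⟨k, i, hi, rfl⟩ := Nat.exists_eq_pow_mul_and_not_dvd ha r (by omega)
    rw [count_digitParts_pow_mul hr s hi]
    exact Nat.mod_lt _ (by omega)

theorem count_glaisher (hr : r ≠ 0) (s : Multiset ℕ) (a : ℕ) :
    (glaisher r s).count a = r * s.count (r * a) + (digitParts r s).count a := by
  rw [glaisher, Multiset.count_add, Multiset.count_nsmul, count_divParts hr]

theorem count_glaisher_div (hr : 1 < r) (s : Multiset ℕ) (a : ℕ) :
    (glaisher r s).count a / r = s.count (r * a) := by
  rw [count_glaisher (by omega), Nat.mul_add_div (by omega),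
    Nat.div_eq_of_lt (count_digitParts_lt hr s a), add_zero]

theorem count_glaisher_mod (hr : 1 < r) (s : Multiset ℕ) (a : ℕ) :
    (glaisher r s).count a % r = (digitParts r s).count a := by
  rw [count_glaisher (by omega), Nat.mul_add_mod, Nat.mod_eq_of_lt (count_digitParts_lt hr s a)]

theorem glaisher_injective (hr : 1 < r) : Function.Injective (glaisher r) := by
  intro s s' h
  ext b
  by_cases hb : r ∣ b
  · obtain ⟨a, rfl⟩ := hb
    rw [← count_glaisher_div hr, h, count_glaisher_div hr]
  · refine eq_of_forall_div_pow_mod_eq hr fun k => ?_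
    rw [← count_digitParts_pow_mul hr s hb, ← count_glaisher_mod hr, h, count_glaisher_mod hr,
      count_digitParts_pow_mul hr s' hb]

theorem sum_glaisher (hr : 1 < r) (s : Multiset ℕ) : (glaisher r s).sum = s.sum := by
  rw [glaisher, Multiset.sum_add, sum_nsmul_divParts, sum_digitParts hr,
    Multiset.sum_filter_add_sum_filter_not]

theorem zero_notMem_glaisher (hr : 1 < r) {s : Multiset ℕ} (hs : 0 ∉ s) : 0 ∉ glaisher r s := by
  rw [← Multiset.count_eq_zero, count_glaisher (by omega), mul_zero, Multiset.count_eq_zero.mpr hs,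
    count_digitParts_zero (by omega), mul_zero]

theorem filter_le_count_glaisher (hr : 1 < r) (s : Multiset ℕ) :
    (glaisher r s).toFinset.filter (fun a => r ≤ (glaisher r s).count a) =
      (divParts r s).toFinset := by
  ext a
  rw [Finset.mem_filter, Multiset.mem_toFinset, Multiset.mem_toFinset, ← Multiset.count_pos,
    ← Multiset.count_pos, count_divParts (by omega), ← count_glaisher_div hr, Nat.div_pos_iff]
  omega

theorem card_filter_le_count_glaisher (hr : 1 < r) (s : Multiset ℕ) :
    ((glaisher r s).toFinset.filter (fun a => r ≤ (glaisher r s).count a)).card =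
      (s.toFinset.filter (r ∣ ·)).card := by
  rw [filter_le_count_glaisher hr, divParts, Multiset.toFinset_map, Multiset.toFinset_filter,
    Finset.card_image_of_injOn]
  intro x hx y hy hxy
  exact (Nat.div_left_inj (Finset.mem_filter.mp hx).2 (Finset.mem_filter.mp hy).2).mp hxy

theorem sum_count_glaisher_div (hr : 1 < r) (s : Multiset ℕ) :
    ∑ a ∈ (glaisher r s).toFinset, (glaisher r s).count a / r =
      Multiset.card (s.filter (r ∣ ·)) := by
  have hsub : ∀ a ∈ divParts r s, a ∈ (glaisher r s).toFinset := fun a ha => by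
    rw [← Multiset.mem_toFinset, ← filter_le_count_glaisher hr s] at ha
    exact (Finset.mem_filter.mp ha).1
  calc ∑ a ∈ (glaisher r s).toFinset, (glaisher r s).count a / r
      = ∑ a ∈ (glaisher r s).toFinset, (divParts r s).count a :=
        Finset.sum_congr rfl fun a _ => by rw [count_glaisher_div hr, count_divParts (by omega)]
    _ = Multiset.card (divParts r s) := Multiset.sum_count_eq_card hsub
    _ = Multiset.card (s.filter (r ∣ ·)) := Multiset.card_map _ _

def glaisherPartition (hr : 1 < r) {n : ℕ} (p : Nat.Partition n) : Nat.Partition n where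
  parts := glaisher r p.parts
  parts_pos hi := Nat.pos_of_ne_zero fun h =>
    zero_notMem_glaisher hr (fun h0 => (p.parts_pos h0).false) (h ▸ hi)
  parts_sum := (sum_glaisher hr p.parts).trans p.parts_sum

theorem glaisherPartition_injective (hr : 1 < r) (n : ℕ) :
    Function.Injective (glaisherPartition hr (n := n)) := fun _ _ h =>
  Nat.Partition.ext (glaisher_injective hr (congrArg Nat.Partition.parts h))

theorem glaisherPartition_mem_setD_iff (hr : 1 < r) {j n : ℕ} (p : Nat.Partition n) :
    glaisherPartition hr p ∈ setD j r n ↔ p ∈ setO j r n := by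
  simp only [setD, setO, Finset.mem_filter, Finset.mem_univ, true_and]
  rw [show (glaisherPartition hr p).parts = glaisher r p.parts from rfl,
    card_filter_le_count_glaisher hr]

theorem sum_count_div_glaisherPartition (hr : 1 < r) {n : ℕ} (p : Nat.Partition n) :
    ∑ i ∈ (glaisherPartition hr p).parts.toFinset, (glaisherPartition hr p).parts.count i / r =
      ellMod r 0 p := by
  rw [ellMod, ← Multiset.filter_congr fun x _ => Nat.dvd_iff_mod_eq_zero]
  exact sum_count_glaisher_div hr p.parts

theorem sum_ellMod_zero_setO (hr : 1 < r) (j n : ℕ) :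
    ∑ p ∈ setO j r n, ellMod r 0 p =
      ∑ q ∈ setD j r n, ∑ i ∈ q.parts.toFinset, q.parts.count i / r :=
  Finset.sum_equiv
    (Equiv.ofBijective _ (Finite.injective_iff_bijective.mp (glaisherPartition_injective hr n)))
    (fun p => (glaisherPartition_mem_setD_iff hr p).symm)
    (fun p _ => (sum_count_div_glaisherPartition hr p).symm)

theorem sum_card_filter_mod_eq_card (hr : r ≠ 0) (s : Multiset ℕ) :
    ∑ t ∈ range r, Multiset.card (s.filter (· % r = t)) = Multiset.card s := by
  have hmem : ∀ t ∈ s.map (· % r), t ∈ range r := fun t ht => by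
    obtain ⟨x, -, rfl⟩ := Multiset.mem_map.mp ht
    exact Finset.mem_range.mpr (Nat.mod_lt x (Nat.pos_of_ne_zero hr))
  calc ∑ t ∈ range r, Multiset.card (s.filter (· % r = t))
      = ∑ t ∈ range r, (s.map (· % r)).count t :=
        Finset.sum_congr rfl fun t _ => by
          rw [Multiset.count_map]
          exact congrArg _ (Multiset.filter_congr fun _ _ => eq_comm)
    _ = Multiset.card s := by rw [Multiset.sum_count_eq_card hmem, Multiset.card_map]

theorem ellMod_zero_add_sum_ellMod (hr : r ≠ 0) {n : ℕ} (p : Nat.Partition n) :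
    ellMod r 0 p + ∑ t ∈ Icc 1 (r - 1), ellMod r t p = numParts p := by
  have hrange : insert 0 (Icc 1 (r - 1)) = range r := by
    ext t
    simp only [Finset.mem_insert, Finset.mem_Icc, Finset.mem_range]
    omega
  rw [← Finset.sum_insert (f := fun t => ellMod r t p) (by simp), hrange]
  exact sum_card_filter_mod_eq_card hr p.parts

theorem sum_ellBarMod_add_mul_sum_count_div (hr : r ≠ 0) {n : ℕ} (q : Nat.Partition n) :
    ∑ t ∈ Icc 1 (r - 1), ellBarMod r t q + r * ∑ i ∈ q.parts.toFinset, q.parts.count i / r =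
      numParts q := by
  have hbar : ∑ t ∈ Icc 1 (r - 1), ellBarMod r t q =
      ∑ i ∈ q.parts.toFinset, q.parts.count i % r := by
    simp only [ellBarMod, Finset.card_filter]
    rw [Finset.sum_comm]
    refine Finset.sum_congr rfl fun i _ => ?_
    have hlt := Nat.mod_lt (q.parts.count i) (Nat.pos_of_ne_zero hr)
    have hfilter : (Icc 1 (r - 1)).filter (· ≤ q.parts.count i % r) =
        Icc 1 (q.parts.count i % r) := by
      ext t
      simp only [Finset.mem_filter, Finset.mem_Icc]
      omega
    rw [← Finset.card_filter, hfilter, Nat.card_Icc, Nat.add_sub_cancel]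
  rw [hbar, Finset.mul_sum, ← Finset.sum_add_distrib, numParts, ← Multiset.toFinset_sum_count_eq]
  exact Finset.sum_congr rfl fun i _ => Nat.mod_add_div _ _

end Glaisher

/-- The sum over `t = 1, …, r-1` of `E_{j,r,t}(n)` equals `b_{j,r}(n)`. -/
theorem sum_EDiff_eq_bDiff (n j r : ℕ) (hr : 2 ≤ r) :
    ∑ t ∈ Finset.Icc 1 (r - 1), EDiff j r t n = bDiff j r n := by
  have hr0 : r ≠ 0 := by omega
  have hO : ∀ p : Nat.Partition n, ∑ t ∈ Icc 1 (r - 1), ((ellMod r t p : ℤ) - ellMod r 0 p) =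
      numParts p - r * ellMod r 0 p := by
    intro p
    rw [Finset.sum_sub_distrib, Finset.sum_const, Nat.card_Icc, nsmul_eq_mul,
      ← Glaisher.ellMod_zero_add_sum_ellMod hr0 p]
    push_cast [Nat.sub_add_cancel (by omega : 1 ≤ r), Nat.cast_sub (by omega : 1 ≤ r)]
    ring
  have hD : ∀ q : Nat.Partition n, ∑ t ∈ Icc 1 (r - 1), (ellBarMod r t q : ℤ) =
      numParts q - r * ((∑ i ∈ q.parts.toFinset, q.parts.count i / r : ℕ) : ℤ) := by
    intro q
    rw [← Glaisher.sum_ellBarMod_add_mul_sum_count_div hr0 q]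
    push_cast
    ring
  have key := congrArg (Nat.cast : ℕ → ℤ) (Glaisher.sum_ellMod_zero_setO (by omega : 1 < r) j n)
  rw [Nat.cast_sum, Nat.cast_sum] at key
  calc ∑ t ∈ Icc 1 (r - 1), EDiff j r t n
      = ∑ p ∈ setO j r n, ∑ t ∈ Icc 1 (r - 1), ((ellMod r t p : ℤ) - ellMod r 0 p) -
          ∑ q ∈ setD j r n, ∑ t ∈ Icc 1 (r - 1), (ellBarMod r t q : ℤ) := by
        unfold EDiff
        rw [Finset.sum_sub_distrib, Finset.sum_comm, Finset.sum_comm (s := Icc 1 (r - 1))]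
    _ = bDiff j r n := by
        simp only [hO, hD, bDiff, Finset.sum_sub_distrib, ← Finset.mul_sum, key]
        ring
end

section
/- For all non-negative integers n, j and all integers r ≥ 2, b'_{j,r}(n) = T_{j+1,r}(n) − T_{j,r}(n), where the equality holds in the integers. -/
open Finset

/-!
Write `|s|` for the sum of the parts of `s`. Both `O_{j,r}(n)` and `D_{j,r}(n)` are in bijection
with the pairs `(s, t)` of partitions with `|s| + r |t| = n`, no part of `s` divisible by `r` and
`ℓ̄(t) = j`: on the `O` side `λ = s ∪ r t`, on the `D` side `λ = G(s) ∪ tʳ`, where `tʳ` repeats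
every part of `t` exactly `r` times and `G` is Glaisher's bijection (a part `b` of `s` whose
multiplicity has base-`r` digits `dᵢ` becomes `dᵢ` parts `b rⁱ`). Hence `ℓ̄(λ) = ℓ̄(s) + ℓ̄(t)` on
the `O` side and `ℓ̄(λ) = ℓ̄(G s) + ℓ̄(t) - ℓ̄(G s ∩ t)` on the `D` side, while
`ℓ̄(G s) = ℓ̄(s) + N(s)` with `N(s)` the number of non-leading nonzero digits. The parts of
`G s ∩ t` that are simple in `t` are exactly those counted by `T_{j,r}`, so it remains to see that
`Σ N(s)` over the pairs with `ℓ̄(t) = j` equals the number of repeated parts of `G s ∩ t` over the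
same pairs plus `T_{j+1,r}(n)`. Both count the triples `(s, t, x)` with `x` a part of `G s` and
`|s| + r |t| + r x = n`: for a non-leading part `x = b rⁱ` remove `r^(i+1)` copies of `b` from
`s`, which leaves the digit `i` intact; for a part `x` of `G s ∩ t` remove one copy of `x` from `t`.
-/

namespace BeckIdentity

variable {r : ℕ}

/-! ### `r`-adic valuations and base-`r` digits -/

noncomputable def freePart (r x : ℕ) : ℕ := x / r ^ multiplicity r x

theorem freePart_mul_pow_multiplicity (r x : ℕ) : freePart r x * r ^ multiplicity r x = x :=
  Nat.div_mul_cancel (pow_multiplicity_dvd r x)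

theorem not_dvd_freePart (hr : 2 ≤ r) {x : ℕ} (hx : x ≠ 0) : ¬ r ∣ freePart r x := by
  rintro ⟨c, hc⟩
  have hfin : FiniteMultiplicity r x :=
    Nat.finiteMultiplicity_iff.2 ⟨by omega, Nat.pos_of_ne_zero hx⟩
  refine hfin.not_pow_dvd_of_multiplicity_lt (Nat.lt_succ_self _) ⟨c, ?_⟩
  calc x = freePart r x * r ^ multiplicity r x := (freePart_mul_pow_multiplicity r x).symm
    _ = r ^ (multiplicity r x + 1) * c := by rw [hc]; ring

theorem multiplicity_mul_pow (hr : 2 ≤ r) {b : ℕ} (hb : ¬ r ∣ b) (i : ℕ) :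
    multiplicity r (b * r ^ i) = i := by
  refine multiplicity_eq_of_dvd_of_not_dvd (Dvd.intro_left _ rfl) fun h => hb ?_
  rw [pow_succ, mul_comm b] at h
  exact Nat.dvd_of_mul_dvd_mul_left (by positivity) h

theorem freePart_mul_pow (hr : 2 ≤ r) {b : ℕ} (hb : ¬ r ∣ b) (i : ℕ) :
    freePart r (b * r ^ i) = b := by
  rw [freePart, multiplicity_mul_pow hr hb, Nat.mul_div_cancel _ (by positivity)]

theorem eq_of_mul_pow_eq_mul_pow (hr : 2 ≤ r) {b b' i i' : ℕ} (hb : ¬ r ∣ b) (hb' : ¬ r ∣ b')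
    (h : b * r ^ i = b' * r ^ i') : b = b' ∧ i = i' := by
  refine ⟨?_, ?_⟩
  · rw [← freePart_mul_pow hr hb i, h, freePart_mul_pow hr hb']
  · rw [← multiplicity_mul_pow hr hb i, h, multiplicity_mul_pow hr hb']

theorem multiplicity_lt_self (hr : 2 ≤ r) {x : ℕ} (hx : x ≠ 0) : multiplicity r x < x :=
  calc multiplicity r x < r ^ multiplicity r x := Nat.lt_pow_self (by omega)
    _ ≤ x := Nat.le_of_dvd (Nat.pos_of_ne_zero hx) (pow_multiplicity_dvd r x)

theorem sum_range_pow_mul_digit (r m N : ℕ) :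
    ∑ i ∈ range N, r ^ i * (m / r ^ i % r) = m % r ^ N := by
  induction N with
  | zero => simp [Nat.mod_one]
  | succ N ih => rw [sum_range_succ, ih, Nat.mod_pow_succ]

theorem sum_range_pow_mul_digit_of_lt (r : ℕ) {m N : ℕ} (h : m < r ^ N) :
    ∑ i ∈ range N, r ^ i * (m / r ^ i % r) = m := by
  rw [sum_range_pow_mul_digit, Nat.mod_eq_of_lt h]

theorem sum_range_succ_pow_mul (r : ℕ) (c : ℕ → ℕ) (N : ℕ) :
    ∑ i ∈ range (N + 1), r ^ i * c i = c 0 + r * ∑ i ∈ range N, r ^ i * c (i + 1) := by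
  rw [sum_range_succ', mul_sum, add_comm]
  simp only [pow_succ, pow_zero, one_mul, mul_assoc, mul_comm r]

theorem sum_range_pow_mul_div_pow_mod {c : ℕ → ℕ} (hc : ∀ i, c i < r) {v N : ℕ}
    (hv : v < N) : (∑ i ∈ range N, r ^ i * c i) / r ^ v % r = c v := by
  have hr : 0 < r := (Nat.zero_le _).trans_lt (hc 0)
  obtain ⟨N, rfl⟩ : ∃ N', N = N' + 1 := ⟨N - 1, by omega⟩
  rw [sum_range_succ_pow_mul]
  induction v generalizing c N with
  | zero => rw [pow_zero, Nat.div_one, Nat.add_mul_mod_self_left, Nat.mod_eq_of_lt (hc 0)]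
  | succ v ih =>
    obtain ⟨N, rfl⟩ : ∃ N', N = N' + 1 := ⟨N - 1, by omega⟩
    rw [pow_succ', ← Nat.div_div_eq_div_mul, Nat.add_mul_div_left _ _ hr,
      Nat.div_eq_of_lt (hc 0), zero_add, sum_range_succ_pow_mul]
    exact ih (fun i => hc (i + 1)) N (by omega)

/-! ### Glaisher's bijection -/

theorem mul_pow_eq_iff (hr : 2 ≤ r) {b : ℕ} (hb : ¬ r ∣ b) {i x : ℕ} :
    b * r ^ i = x ↔ freePart r x = b ∧ multiplicity r x = i := by
  constructor
  · rintro rfl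
    exact ⟨freePart_mul_pow hr hb i, multiplicity_mul_pow hr hb i⟩
  · rintro ⟨rfl, rfl⟩
    exact freePart_mul_pow_multiplicity r x

def glaisher (r : ℕ) (s : Multiset ℕ) : Multiset ℕ :=
  ∑ b ∈ s.toFinset, ∑ i ∈ range (s.count b),
    Multiset.replicate (s.count b / r ^ i % r) (b * r ^ i)

noncomputable def glaisherInv (r : ℕ) (s : Multiset ℕ) : Multiset ℕ :=
  s.bind fun x => Multiset.replicate (r ^ multiplicity r x) (freePart r x)

theorem exists_eq_mul_pow_of_mem_glaisher {s : Multiset ℕ} {x : ℕ} (hx : x ∈ glaisher r s) :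
    ∃ b ∈ s, ∃ i, x = b * r ^ i := by
  simp only [glaisher, Multiset.mem_sum, Multiset.mem_toFinset] at hx
  obtain ⟨b, hb, i, -, hx⟩ := hx
  exact ⟨b, hb, i, Multiset.eq_of_mem_replicate hx⟩

theorem sum_glaisher (hr : 2 ≤ r) (s : Multiset ℕ) : (glaisher r s).sum = s.sum := by
  rw [glaisher, Multiset.sum_sum, Finset.sum_multiset_count s]
  refine sum_congr rfl fun b _ => ?_
  simp only [Multiset.sum_sum, Multiset.sum_replicate, smul_eq_mul]
  calc ∑ i ∈ range (s.count b), s.count b / r ^ i % r * (b * r ^ i)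
      = (∑ i ∈ range (s.count b), r ^ i * (s.count b / r ^ i % r)) * b := by
        rw [sum_mul]; exact sum_congr rfl fun i _ => by ring
    _ = s.count b * b := by
        rw [sum_range_pow_mul_digit_of_lt r (Nat.lt_pow_self (by omega))]

theorem sum_glaisherInv (s : Multiset ℕ) : (glaisherInv r s).sum = s.sum := by
  rw [glaisherInv, Multiset.sum_bind]
  conv_rhs => rw [← Multiset.map_id s]
  refine congrArg Multiset.sum (Multiset.map_congr rfl fun x _ => ?_)
  rw [Multiset.sum_replicate, smul_eq_mul, mul_comm, freePart_mul_pow_multiplicity, id]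

theorem not_dvd_of_mem_glaisherInv (hr : 2 ≤ r) {ν : Multiset ℕ} (h0 : 0 ∉ ν) {y : ℕ}
    (hy : y ∈ glaisherInv r ν) : ¬ r ∣ y := by
  obtain ⟨x, hx, hy⟩ := Multiset.mem_bind.1 hy
  rw [Multiset.eq_of_mem_replicate hy]
  exact not_dvd_freePart hr (ne_of_mem_of_not_mem hx h0)

theorem count_glaisherInv (hr : 2 ≤ r) {ν : Multiset ℕ} {b N : ℕ} (hb : ¬ r ∣ b)
    (hN : ∀ x ∈ ν, multiplicity r x < N) :
    (glaisherInv r ν).count b = ∑ i ∈ range N, r ^ i * ν.count (b * r ^ i) := by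
  induction ν using Multiset.induction_on with
  | empty => simp [glaisherInv]
  | cons x ν ih =>
    rw [glaisherInv, Multiset.cons_bind, ← glaisherInv, Multiset.count_add,
      ih fun y hy => hN y (Multiset.mem_cons_of_mem hy)]
    simp only [Multiset.count_cons, mul_add, sum_add_distrib, Multiset.count_replicate,
      mul_pow_eq_iff hr hb, mul_ite, mul_one, mul_zero]
    rw [add_comm]
    congr 1
    by_cases hfx : freePart r x = b
    · simp only [hfx, true_and, if_true]
      rw [sum_ite_eq, if_pos (mem_range.2 (hN x (Multiset.mem_cons_self x ν)))]
    · simp [hfx]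

section

variable (hr : 2 ≤ r) {s : Multiset ℕ} (hs : ∀ b ∈ s, ¬ r ∣ b)
include hr hs

theorem count_glaisher_mul_pow {b : ℕ} (hb : ¬ r ∣ b) (i : ℕ) :
    (glaisher r s).count (b * r ^ i) = s.count b / r ^ i % r := by
  rw [glaisher, Multiset.count_sum', sum_eq_single b]
  · rw [Multiset.count_sum', sum_eq_single i]
    · exact Multiset.count_replicate_self _ _
    · intro i' _ hi'
      rw [Multiset.count_replicate, if_neg fun h => hi' (eq_of_mul_pow_eq_mul_pow hr hb hb h).2]
    · -- the digits of `s.count b` beyond position `s.count b` vanish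
      intro hi
      rw [Multiset.count_replicate_self, Nat.div_eq_of_lt, Nat.zero_mod]
      exact (not_lt.1 (mt mem_range.2 hi)).trans_lt (Nat.lt_pow_self (by omega))
  · intro b' hb' hne
    rw [Multiset.count_sum']
    refine sum_eq_zero fun i' _ => ?_
    have hb'' := hs b' (Multiset.mem_toFinset.1 hb')
    rw [Multiset.count_replicate, if_neg fun h => hne (eq_of_mul_pow_eq_mul_pow hr hb'' hb h).1]
  · intro hb'
    rw [Multiset.count_eq_zero.2 (mt Multiset.mem_toFinset.2 hb'), range_zero, sum_empty,
      Multiset.count_zero]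

theorem count_glaisher {x : ℕ} (hx : x ≠ 0) :
    (glaisher r s).count x = s.count (freePart r x) / r ^ multiplicity r x % r := by
  conv_lhs => rw [← freePart_mul_pow_multiplicity r x]
  exact count_glaisher_mul_pow hr hs (not_dvd_freePart hr hx) _

theorem mem_glaisher {x : ℕ} (hx : x ≠ 0) :
    x ∈ glaisher r s ↔ s.count (freePart r x) / r ^ multiplicity r x % r ≠ 0 := by
  rw [← Multiset.count_ne_zero, count_glaisher hr hs hx]

theorem zero_notMem_glaisher : 0 ∉ glaisher r s := by
  intro h
  obtain ⟨b, hb, i, h⟩ := exists_eq_mul_pow_of_mem_glaisher h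
  rcases Nat.mul_eq_zero.1 h.symm with rfl | h
  · exact hs 0 hb (dvd_zero r)
  · exact pow_ne_zero i (by omega) h

theorem count_glaisher_lt (x : ℕ) : (glaisher r s).count x < r := by
  rcases eq_or_ne x 0 with rfl | hx
  · rw [Multiset.count_eq_zero.2 (zero_notMem_glaisher hr hs)]
    omega
  · rw [count_glaisher hr hs hx]
    exact Nat.mod_lt _ (by omega)

theorem glaisherInv_glaisher : glaisherInv r (glaisher r s) = s := by
  have h0 := zero_notMem_glaisher hr hs
  ext b
  by_cases hb : r ∣ b
  · rw [Multiset.count_eq_zero.2 fun h => not_dvd_of_mem_glaisherInv hr h0 h hb,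
      Multiset.count_eq_zero.2 fun h => hs b h hb]
  · have hN : ∀ x ∈ glaisher r s, multiplicity r x < s.sum + s.card := fun x hx =>
      calc multiplicity r x < x := multiplicity_lt_self hr (ne_of_mem_of_not_mem hx h0)
        _ ≤ s.sum := sum_glaisher hr s ▸ Multiset.le_sum_of_mem hx
        _ ≤ s.sum + s.card := Nat.le_add_right _ _
    have hcount : s.count b < r ^ (s.sum + s.card) :=
      calc s.count b ≤ s.card := Multiset.count_le_card b s
        _ ≤ s.sum + s.card := Nat.le_add_left _ _
        _ < r ^ (s.sum + s.card) := Nat.lt_pow_self (by omega)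
    simp only [count_glaisherInv hr hb hN, count_glaisher_mul_pow hr hs hb]
    exact sum_range_pow_mul_digit_of_lt r hcount

omit hs in
theorem glaisher_glaisherInv {ν : Multiset ℕ} (h0 : 0 ∉ ν) (hν : ∀ a, ν.count a < r) :
    glaisher r (glaisherInv r ν) = ν := by
  have hs : ∀ y ∈ glaisherInv r ν, ¬ r ∣ y := fun y hy => not_dvd_of_mem_glaisherInv hr h0 hy
  ext x
  rcases eq_or_ne x 0 with rfl | hx
  · rw [Multiset.count_eq_zero.2 (zero_notMem_glaisher hr hs), Multiset.count_eq_zero.2 h0]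
  · have hN : ∀ y ∈ ν, multiplicity r y < ν.sum + multiplicity r x + 1 := fun y hy => by
      have := multiplicity_lt_self hr (ne_of_mem_of_not_mem hy h0)
      have := Multiset.le_sum_of_mem hy
      omega
    rw [count_glaisher hr hs hx, count_glaisherInv hr (not_dvd_freePart hr hx) hN,
      sum_range_pow_mul_div_pow_mod (fun i => hν _) (by omega), freePart_mul_pow_multiplicity]

end

/-! ### Partitions as pairs `(s, t)` -/

def partsFinset (n : ℕ) : Finset (Multiset ℕ) :=
  univ.image fun p : Nat.Partition n => p.parts

theorem mem_partsFinset {n : ℕ} {s : Multiset ℕ} : s ∈ partsFinset n ↔ s.sum = n ∧ 0 ∉ s := by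
  simp only [partsFinset, mem_image, mem_univ, true_and]
  constructor
  · rintro ⟨p, rfl⟩
    exact ⟨p.parts_sum, fun h => (p.parts_pos h).ne rfl⟩
  · rintro ⟨hsum, h0⟩
    exact ⟨⟨s, fun hx => Nat.pos_of_ne_zero (ne_of_mem_of_not_mem hx h0), hsum⟩, rfl⟩

theorem sum_filter_partition {M : Type*} [AddCommMonoid M] (n : ℕ) (Q : Multiset ℕ → Prop)
    [DecidablePred Q] (f : Multiset ℕ → M) :
    ∑ p ∈ univ.filter (fun p : Nat.Partition n => Q p.parts), f p.parts
      = ∑ s ∈ (partsFinset n).filter Q, f s := by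
  rw [partsFinset, filter_image, sum_image fun p _ q _ h => Nat.Partition.ext h]

def boundedParts (n : ℕ) : Finset (Multiset ℕ) := (range (n + 1)).biUnion partsFinset

theorem mem_boundedParts {n : ℕ} {s : Multiset ℕ} : s ∈ boundedParts n ↔ s.sum ≤ n ∧ 0 ∉ s := by
  simp only [boundedParts, mem_biUnion, mem_range, mem_partsFinset]
  constructor
  · rintro ⟨m, hm, rfl, h0⟩
    exact ⟨by omega, h0⟩
  · rintro ⟨hsum, h0⟩
    exact ⟨s.sum, by omega, rfl, h0⟩

/-- The pairs `(s, t)` indexing both `O_{j,r}(n)` and `D_{j,r}(n)`. -/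
def pairs (r n j : ℕ) : Finset (Multiset ℕ × Multiset ℕ) :=
  (boundedParts n ×ˢ boundedParts n).filter fun q =>
    q.1.sum + r * q.2.sum = n ∧ (∀ x ∈ q.1, ¬ r ∣ x) ∧ 0 ∉ q.2 ∧ q.2.toFinset.card = j

theorem mem_pairs (hr : 0 < r) {n j : ℕ} {q : Multiset ℕ × Multiset ℕ} :
    q ∈ pairs r n j ↔
      q.1.sum + r * q.2.sum = n ∧ (∀ x ∈ q.1, ¬ r ∣ x) ∧ 0 ∉ q.2 ∧ q.2.toFinset.card = j := by
  rw [pairs, mem_filter, and_iff_right_iff_imp]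
  rintro ⟨hsum, hs, ht, -⟩
  have : q.2.sum ≤ r * q.2.sum := Nat.le_mul_of_pos_left _ hr
  exact mem_product.2 ⟨mem_boundedParts.2 ⟨by omega, fun h => hs 0 h (dvd_zero r)⟩,
    mem_boundedParts.2 ⟨by omega, ht⟩⟩

theorem sum_map_const_mul (r : ℕ) (t : Multiset ℕ) : (t.map (r * ·)).sum = r * t.sum := by
  simpa using Multiset.sum_map_mul_left (a := r) (f := id) (s := t)

theorem filter_add_map_mul_div (r : ℕ) (s : Multiset ℕ) :
    s.filter (¬ r ∣ ·) + ((s.filter (r ∣ ·)).map (· / r)).map (r * ·) = s := by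
  rw [Multiset.map_map]
  conv_rhs => rw [← Multiset.filter_add_not (r ∣ ·) s, add_comm]
  congr 1
  conv_rhs => rw [← Multiset.map_id (s.filter (r ∣ ·))]
  exact Multiset.map_congr rfl fun x hx => Nat.mul_div_cancel' (Multiset.of_mem_filter hx)

section

variable {s t : Multiset ℕ} (hs : ∀ x ∈ s, ¬ r ∣ x)
include hs

theorem filter_not_dvd_add_map_mul : (s + t.map (r * ·)).filter (¬ r ∣ ·) = s := by
  rw [Multiset.filter_add, Multiset.filter_eq_self.2 hs, Multiset.filter_eq_nil.2, add_zero]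
  simp

theorem filter_dvd_add_map_mul : (s + t.map (r * ·)).filter (r ∣ ·) = t.map (r * ·) := by
  rw [Multiset.filter_add, Multiset.filter_eq_nil.2 hs, Multiset.filter_eq_self.2, zero_add]
  simp

theorem card_toFinset_add_map_mul (hr : 0 < r) :
    (s + t.map (r * ·)).toFinset.card = s.toFinset.card + t.toFinset.card := by
  rw [Multiset.toFinset_add, Multiset.toFinset_map, card_union_of_disjoint,
    card_image_of_injective _ (mul_right_injective₀ hr.ne')]
  refine disjoint_left.2 fun x hx hx' => ?_
  obtain ⟨y, -, rfl⟩ := mem_image.1 hx'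
  exact hs _ (Multiset.mem_toFinset.1 hx) (Dvd.intro y rfl)

theorem card_toFinset_filter_dvd_add_map_mul (hr : 0 < r) :
    ((s + t.map (r * ·)).toFinset.filter (r ∣ ·)).card = t.toFinset.card := by
  rw [← Multiset.toFinset_filter, filter_dvd_add_map_mul hs, Multiset.toFinset_map,
    card_image_of_injective _ (mul_right_injective₀ hr.ne')]

end

theorem sum_setO_eq {M : Type*} [AddCommMonoid M] (hr : 0 < r) (n j : ℕ) (f : Multiset ℕ → M) :
    ∑ p ∈ setO j r n, f p.parts = ∑ q ∈ pairs r n j, f (q.1 + q.2.map (r * ·)) := by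
  rw [setO, sum_filter_partition n fun s => (s.toFinset.filter (r ∣ ·)).card = j]
  refine sum_nbij' (fun s => (s.filter (¬ r ∣ ·), (s.filter (r ∣ ·)).map (· / r)))
    (fun q => q.1 + q.2.map (r * ·)) (fun s hs => ?_) (fun q hq => ?_)
    (fun s _ => filter_add_map_mul_div r s) (fun q hq => ?_)
    (fun s _ => congrArg f (filter_add_map_mul_div r s).symm)
  · obtain ⟨hs, hcard⟩ := mem_filter.1 hs
    obtain ⟨hsum, h0⟩ := mem_partsFinset.1 hs
    have hsplit := filter_add_map_mul_div r s
    have hnd : ∀ x ∈ s.filter (¬ r ∣ ·), ¬ r ∣ x := fun x hx => (Multiset.mem_filter.1 hx).2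
    refine (mem_pairs hr).2 ⟨?_, hnd, fun h => ?_, ?_⟩
    · rw [← sum_map_const_mul, ← Multiset.sum_add, hsplit, hsum]
    · obtain ⟨y, hy, hy0⟩ := Multiset.mem_map.1 h
      obtain ⟨hys, hdvd⟩ := Multiset.mem_filter.1 hy
      have := Nat.le_of_dvd (Nat.pos_of_ne_zero (ne_of_mem_of_not_mem hys h0)) hdvd
      rw [Nat.div_eq_zero_iff] at hy0
      omega
    · rw [← card_toFinset_filter_dvd_add_map_mul hnd hr, hsplit, hcard]
  · obtain ⟨hsum, hs, ht, hcard⟩ := (mem_pairs hr).1 hq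
    refine mem_filter.2 ⟨mem_partsFinset.2 ⟨?_, fun h => ?_⟩, ?_⟩
    · rw [Multiset.sum_add, sum_map_const_mul, hsum]
    · rcases Multiset.mem_add.1 h with h | h
      · exact hs 0 h (dvd_zero r)
      · obtain ⟨y, hy, hy0⟩ := Multiset.mem_map.1 h
        rw [Nat.mul_eq_zero, or_iff_right hr.ne'] at hy0
        exact ht (hy0 ▸ hy)
    · rw [card_toFinset_filter_dvd_add_map_mul hs hr, hcard]
  · obtain ⟨-, hs, -, -⟩ := (mem_pairs hr).1 hq
    refine Prod.ext (filter_not_dvd_add_map_mul hs) ?_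
    rw [filter_dvd_add_map_mul hs, Multiset.map_map]
    conv_rhs => rw [← Multiset.map_id q.2]
    exact Multiset.map_congr rfl fun y _ => Nat.mul_div_cancel_left y hr

def multDiv (r : ℕ) (s : Multiset ℕ) : Multiset ℕ :=
  ∑ a ∈ s.toFinset, Multiset.replicate (s.count a / r) a

theorem count_multDiv (r : ℕ) (s : Multiset ℕ) (a : ℕ) : (multDiv r s).count a = s.count a / r := by
  simp only [multDiv, Multiset.count_sum', Multiset.count_replicate, sum_ite_eq',
    Multiset.mem_toFinset]
  split_ifs with h
  · rfl
  · rw [Multiset.count_eq_zero.2 h, Nat.zero_div]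

theorem count_sub_nsmul_multDiv (r : ℕ) (s : Multiset ℕ) (a : ℕ) :
    (s - r • multDiv r s).count a = s.count a % r := by
  rw [Multiset.count_sub, Multiset.count_nsmul, count_multDiv, Nat.mod_eq_sub_mul_div]

theorem sub_nsmul_multDiv_add (r : ℕ) (s : Multiset ℕ) :
    s - r • multDiv r s + r • multDiv r s = s :=
  tsub_add_cancel_of_le <| Multiset.le_iff_count.2 fun a => by
    rw [Multiset.count_nsmul, count_multDiv]
    exact Nat.mul_div_le _ _

theorem multDiv_add_nsmul {g : Multiset ℕ} (t : Multiset ℕ) (hg : ∀ a, g.count a < r) :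
    multDiv r (g + r • t) = t := by
  ext a
  rw [count_multDiv, Multiset.count_add, Multiset.count_nsmul,
    Nat.add_mul_div_left _ _ ((Nat.zero_le _).trans_lt (hg a)), Nat.div_eq_of_lt (hg a), zero_add]

theorem toFinset_multDiv (hr : 0 < r) (s : Multiset ℕ) :
    (multDiv r s).toFinset = s.toFinset.filter (r ≤ s.count ·) := by
  ext a
  rw [Multiset.mem_toFinset, mem_filter, Multiset.mem_toFinset, ← Multiset.count_pos,
    count_multDiv, Nat.div_pos_iff, ← Multiset.count_pos]
  constructor
  · rintro ⟨-, h⟩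
    exact ⟨hr.trans_le h, h⟩
  · rintro ⟨-, h⟩
    exact ⟨hr, h⟩

theorem glaisher_glaisherInv_sub_nsmul_multDiv_add (hr : 2 ≤ r) {s : Multiset ℕ} (h0 : 0 ∉ s) :
    glaisher r (glaisherInv r (s - r • multDiv r s)) + r • multDiv r s = s := by
  rw [glaisher_glaisherInv hr (fun h => h0 (Multiset.mem_of_le (Multiset.sub_le_self _ _) h))
    fun a => count_sub_nsmul_multDiv r s a ▸ Nat.mod_lt _ (by omega), sub_nsmul_multDiv_add]

theorem filter_le_count_glaisher_add_nsmul (hr : 2 ≤ r) {s : Multiset ℕ} (hs : ∀ b ∈ s, ¬ r ∣ b)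
    (t : Multiset ℕ) :
    (glaisher r s + r • t).toFinset.filter (r ≤ (glaisher r s + r • t).count ·) = t.toFinset := by
  rw [← toFinset_multDiv (by omega), multDiv_add_nsmul _ (count_glaisher_lt hr hs)]

theorem sum_setD_eq {M : Type*} [AddCommMonoid M] (hr : 2 ≤ r) (n j : ℕ) (f : Multiset ℕ → M) :
    ∑ p ∈ setD j r n, f p.parts = ∑ q ∈ pairs r n j, f (glaisher r q.1 + r • q.2) := by
  have hr0 : 0 < r := by omega
  rw [setD, sum_filter_partition n fun s => (s.toFinset.filter (r ≤ s.count ·)).card = j]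
  have h0 : ∀ s ∈ (partsFinset n).filter fun s => (s.toFinset.filter (r ≤ s.count ·)).card = j,
      0 ∉ s := fun s hs => (mem_partsFinset.1 (mem_filter.1 hs).1).2
  refine sum_nbij' (fun s => (glaisherInv r (s - r • multDiv r s), multDiv r s))
    (fun q => glaisher r q.1 + r • q.2) (fun s hs => ?_) (fun q hq => ?_)
    (fun s hs => glaisher_glaisherInv_sub_nsmul_multDiv_add hr (h0 s hs)) (fun q hq => ?_)
    (fun s hs => congrArg f (glaisher_glaisherInv_sub_nsmul_multDiv_add hr (h0 s hs)).symm)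
  · obtain ⟨hs', hQ⟩ := mem_filter.1 hs
    obtain ⟨hsum, h0⟩ := mem_partsFinset.1 hs'
    refine (mem_pairs hr0).2 ⟨?_, fun x hx => ?_, fun h => ?_, ?_⟩
    · rw [sum_glaisherInv, ← smul_eq_mul, ← Multiset.sum_nsmul, ← Multiset.sum_add,
        sub_nsmul_multDiv_add, hsum]
    · exact not_dvd_of_mem_glaisherInv hr
        (fun h => h0 (Multiset.mem_of_le (Multiset.sub_le_self _ _) h)) hx
    · rw [← Multiset.mem_toFinset, toFinset_multDiv hr0, mem_filter, Multiset.mem_toFinset] at h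
      exact h0 h.1
    · rw [toFinset_multDiv hr0, hQ]
  · obtain ⟨hsum, hs, ht, hcard⟩ := (mem_pairs hr0).1 hq
    refine mem_filter.2 ⟨mem_partsFinset.2 ⟨?_, fun h => ?_⟩, ?_⟩
    · rw [Multiset.sum_add, sum_glaisher hr, Multiset.sum_nsmul, smul_eq_mul, hsum]
    · rcases Multiset.mem_add.1 h with h | h
      · exact zero_notMem_glaisher hr hs h
      · exact ht (Multiset.mem_nsmul.1 h).2
    · rw [filter_le_count_glaisher_add_nsmul hr hs, hcard]
  · obtain ⟨-, hs, -, -⟩ := (mem_pairs hr0).1 hq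
    have ht := multDiv_add_nsmul q.2 (count_glaisher_lt hr hs)
    refine Prod.ext ?_ ht
    dsimp only
    rw [ht, add_tsub_cancel_right, glaisherInv_glaisher hr hs]

/-! ### Counting different parts -/

def sharedSimpleParts (g t : Multiset ℕ) : Finset ℕ :=
  t.toFinset.filter fun a => t.count a = 1 ∧ a ∈ g

def sharedRepeatedParts (g t : Multiset ℕ) : Finset ℕ :=
  t.toFinset.filter fun a => 2 ≤ t.count a ∧ a ∈ g

theorem card_toFinset_inter (g t : Multiset ℕ) :
    (g.toFinset ∩ t.toFinset).card
      = (sharedSimpleParts g t).card + (sharedRepeatedParts g t).card := by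
  rw [sharedSimpleParts, sharedRepeatedParts, ← card_union_of_disjoint
    (disjoint_filter.2 fun a _ h1 h2 => by omega)]
  congr 1
  ext a
  simp only [mem_inter, mem_union, mem_filter, Multiset.mem_toFinset]
  constructor
  · rintro ⟨hg, ht⟩
    have := Multiset.count_pos.2 ht
    by_cases h : t.count a = 1
    · exact Or.inl ⟨ht, h, hg⟩
    · exact Or.inr ⟨ht, by omega, hg⟩
  · rintro (⟨ht, -, hg⟩ | ⟨ht, -, hg⟩) <;> exact ⟨hg, ht⟩

/-- The parts counted by `T_{j,r}`. -/
def midMultParts (r : ℕ) (s : Multiset ℕ) : Finset ℕ :=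
  s.toFinset.filter fun i => r + 1 ≤ s.count i ∧ s.count i ≤ 2 * r - 1

theorem midMultParts_add_nsmul {g : Multiset ℕ} (t : Multiset ℕ) (hg : ∀ a, g.count a < r) :
    midMultParts r (g + r • t) = sharedSimpleParts g t := by
  ext a
  simp only [midMultParts, sharedSimpleParts, mem_filter, Multiset.mem_toFinset,
    ← Multiset.count_pos, Multiset.count_add, Multiset.count_nsmul]
  have := hg a
  obtain h | h | h : t.count a = 0 ∨ t.count a = 1 ∨ 2 ≤ t.count a := by omega
  · simp only [h]
    omega
  · simp only [h, mul_one, true_and]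
    omega
  · have := Nat.mul_le_mul_left r h
    omega

theorem toFinset_add_nsmul (hr : r ≠ 0) (g t : Multiset ℕ) :
    (g + r • t).toFinset = g.toFinset ∪ t.toFinset := by
  rw [Multiset.toFinset_add, Multiset.toFinset_nsmul _ _ hr]

/-- The parts `b * rⁱ` of `glaisher r s` whose digit `i` is not the leading base-`r` digit of the
multiplicity of `b` in `s`. -/
noncomputable def nonleadingParts (r : ℕ) (s : Multiset ℕ) : Finset ℕ :=
  (glaisher r s).toFinset.filter fun x => r ^ (multiplicity r x + 1) ≤ s.count (freePart r x)

section

variable (hr : 2 ≤ r) {s : Multiset ℕ} (hs : ∀ b ∈ s, ¬ r ∣ b)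
include hr hs

theorem pow_multiplicity_le_count_of_mem_glaisher {x : ℕ} (hx : x ∈ glaisher r s) :
    r ^ multiplicity r x ≤ s.count (freePart r x) := by
  have hx0 := ne_of_mem_of_not_mem hx (zero_notMem_glaisher hr hs)
  have hdigit := (mem_glaisher hr hs hx0).1 hx
  by_contra h
  rw [Nat.div_eq_of_lt (not_le.1 h), Nat.zero_mod] at hdigit
  exact hdigit rfl

theorem mul_pow_log_count_mem_glaisher {b : ℕ} (hb : b ∈ s) :
    b * r ^ Nat.log r (s.count b) ∈ glaisher r s := by
  have hcount := Multiset.count_ne_zero.2 hb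
  have hpos : 0 < r ^ Nat.log r (s.count b) := by positivity
  have hlt : s.count b < r ^ Nat.log r (s.count b) * r := by
    rw [← pow_succ]
    exact Nat.lt_pow_succ_log_self (by omega) _
  rw [← Multiset.count_ne_zero, count_glaisher_mul_pow hr hs (hs b hb),
    Nat.mod_eq_of_lt ((Nat.div_lt_iff_lt_mul hpos).2 (by rwa [mul_comm])), Ne,
    Nat.div_eq_zero_iff, not_or, not_lt]
  exact ⟨hpos.ne', Nat.pow_log_le_self r hcount⟩

theorem card_toFinset_glaisher :
    (glaisher r s).toFinset.card = s.toFinset.card + (nonleadingParts r s).card := by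
  rw [nonleadingParts, ← card_filter_add_card_filter_not
    (fun x => r ^ (multiplicity r x + 1) ≤ s.count (freePart r x)), add_comm]
  congr 1
  -- a part of `glaisher r s` coming from the leading digit is determined by its `freePart`
  refine card_nbij' (freePart r) (fun b => b * r ^ Nat.log r (s.count b)) ?_ ?_ ?_ ?_
  · intro x hx
    obtain ⟨hx, -⟩ := mem_filter.1 hx
    have := pow_multiplicity_le_count_of_mem_glaisher hr hs (Multiset.mem_toFinset.1 hx)
    rw [mem_coe, Multiset.mem_toFinset, ← Multiset.count_pos]
    exact (Nat.one_le_pow _ _ (by omega)).trans this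
  · intro b hb
    rw [mem_coe, Multiset.mem_toFinset] at hb
    rw [mem_coe, mem_filter, Multiset.mem_toFinset, multiplicity_mul_pow hr (hs b hb),
      freePart_mul_pow hr (hs b hb), not_le]
    exact ⟨mul_pow_log_count_mem_glaisher hr hs hb,
      Nat.lt_pow_succ_log_self (by omega) _⟩
  · intro x hx
    obtain ⟨hx, hlt⟩ := mem_filter.1 hx
    have := pow_multiplicity_le_count_of_mem_glaisher hr hs (Multiset.mem_toFinset.1 hx)
    dsimp only
    rw [Nat.log_eq_of_pow_le_of_lt_pow this (not_le.1 hlt), freePart_mul_pow_multiplicity]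
  · intro b hb
    rw [mem_coe, Multiset.mem_toFinset] at hb
    exact freePart_mul_pow hr (hs b hb) _

theorem card_toFinset_glaisher_add_nsmul (t : Multiset ℕ) :
    (glaisher r s + r • t).toFinset.card + (sharedSimpleParts (glaisher r s) t).card
        + (sharedRepeatedParts (glaisher r s) t).card
      = s.toFinset.card + t.toFinset.card + (nonleadingParts r s).card := by
  rw [toFinset_add_nsmul (by omega), add_assoc, ← card_toFinset_inter, card_union_add_card_inter,
    card_toFinset_glaisher hr hs]
  ring

end

/-! ### Marked pairs -/

def markedPairs (r n j : ℕ) : Finset ((Multiset ℕ × Multiset ℕ) × ℕ) :=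
  ((boundedParts n ×ˢ boundedParts n) ×ˢ range (n + 1)).filter fun z =>
    z.1.1.sum + r * z.1.2.sum + r * z.2 = n ∧ (∀ x ∈ z.1.1, ¬ r ∣ x) ∧ 0 ∉ z.1.2 ∧
      z.1.2.toFinset.card = j ∧ z.2 ∈ glaisher r z.1.1

theorem mem_markedPairs (hr : 0 < r) {n j : ℕ} {s t : Multiset ℕ} {x : ℕ} :
    ((s, t), x) ∈ markedPairs r n j ↔ s.sum + r * t.sum + r * x = n ∧ (∀ y ∈ s, ¬ r ∣ y) ∧
      0 ∉ t ∧ t.toFinset.card = j ∧ x ∈ glaisher r s := by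
  simp only [markedPairs, mem_filter, mem_product, mem_boundedParts, mem_range,
    and_iff_right_iff_imp]
  rintro ⟨hsum, hs, ht, -⟩
  have : t.sum ≤ r * t.sum := Nat.le_mul_of_pos_left _ hr
  have : x ≤ r * x := Nat.le_mul_of_pos_left _ hr
  exact ⟨⟨⟨by omega, fun h => hs 0 h (dvd_zero r)⟩, by omega, ht⟩, by omega⟩

theorem cons_mem_pairs (hr : 0 < r) {n k a : ℕ} {s t : Multiset ℕ} (ha : a ≠ 0) :
    (s, a ::ₘ t) ∈ pairs r n k ↔ s.sum + r * t.sum + r * a = n ∧ (∀ y ∈ s, ¬ r ∣ y) ∧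
      0 ∉ t ∧ (insert a t.toFinset).card = k := by
  rw [mem_pairs hr, Multiset.sum_cons, Multiset.mem_cons, Multiset.toFinset_cons, mul_add,
    add_comm (r * a), ← add_assoc]
  exact and_congr_right' (and_congr_right' (and_congr_left' (not_congr (or_iff_right ha.symm))))

/-- Adding `block r x` to `s` leaves unchanged the base-`r` digit of `s.count (freePart r x)`
that produces the part `x` of `glaisher r s`. -/
noncomputable def block (r x : ℕ) : Multiset ℕ :=
  Multiset.replicate (r ^ (multiplicity r x + 1)) (freePart r x)

theorem sum_block (r x : ℕ) : (block r x).sum = r * x := by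
  rw [block, Multiset.sum_replicate, smul_eq_mul]
  conv_rhs => rw [← freePart_mul_pow_multiplicity r x]
  ring

theorem count_add_block (s : Multiset ℕ) (x : ℕ) :
    (s + block r x).count (freePart r x) = s.count (freePart r x) + r ^ (multiplicity r x + 1) := by
  rw [Multiset.count_add, block, Multiset.count_replicate_self]

theorem block_le {s : Multiset ℕ} {x : ℕ}
    (h : r ^ (multiplicity r x + 1) ≤ s.count (freePart r x)) : block r x ≤ s :=
  Multiset.le_count_iff_replicate_le.1 h

section

variable (hr : 2 ≤ r) {s : Multiset ℕ} (hs : ∀ b ∈ s, ¬ r ∣ b)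
include hr hs

theorem not_dvd_of_mem_add_block {x : ℕ} (hx : x ≠ 0) : ∀ y ∈ s + block r x, ¬ r ∣ y := by
  intro y hy
  rcases Multiset.mem_add.1 hy with hy | hy
  · exact hs y hy
  · rw [block] at hy
    rw [Multiset.eq_of_mem_replicate hy]
    exact not_dvd_freePart hr hx

theorem mem_glaisher_add_block {x : ℕ} (hx : x ≠ 0) :
    x ∈ glaisher r (s + block r x) ↔ x ∈ glaisher r s := by
  rw [mem_glaisher hr (not_dvd_of_mem_add_block hr hs hx) hx, mem_glaisher hr hs hx,
    count_add_block, pow_succ, Nat.add_mul_div_left _ _ (by positivity), Nat.add_mod_right]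

end

theorem card_sigma_nonleadingParts (hr : 2 ≤ r) (n j : ℕ) :
    ((pairs r n j).sigma fun q => nonleadingParts r q.1).card = (markedPairs r n j).card := by
  have hr0 : 0 < r := by omega
  refine card_nbij' (fun z => ((z.1.1 - block r z.2, z.1.2), z.2))
    (fun z => ⟨(z.1.1 + block r z.2, z.1.2), z.2⟩) ?_ ?_ ?_ ?_
  · rintro ⟨⟨s, t⟩, x⟩ hz
    obtain ⟨hq, hx⟩ := mem_sigma.1 hz
    obtain ⟨hsum, hs, ht, hcard⟩ := (mem_pairs hr0).1 hq
    obtain ⟨hx, hle⟩ := mem_filter.1 hx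
    rw [Multiset.mem_toFinset] at hx
    have hx0 := ne_of_mem_of_not_mem hx (zero_notMem_glaisher hr hs)
    have hsplit : s - block r x + block r x = s := tsub_add_cancel_of_le (block_le hle)
    have hs' : ∀ y ∈ s - block r x, ¬ r ∣ y :=
      fun y hy => hs y (Multiset.mem_of_le (Multiset.sub_le_self _ _) hy)
    have hsum' := congrArg Multiset.sum hsplit
    rw [Multiset.sum_add, sum_block] at hsum'
    refine (mem_markedPairs hr0).2 ⟨by dsimp only at hsum ⊢; omega, hs', ht, hcard, ?_⟩
    rwa [← mem_glaisher_add_block hr hs' hx0, hsplit]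
  · rintro ⟨⟨s, t⟩, x⟩ hz
    obtain ⟨hsum, hs, ht, hcard, hx⟩ := (mem_markedPairs hr0).1 hz
    have hx0 := ne_of_mem_of_not_mem hx (zero_notMem_glaisher hr hs)
    refine mem_sigma.2 ⟨(mem_pairs hr0).2 ⟨?_, not_dvd_of_mem_add_block hr hs hx0, ht, hcard⟩,
      mem_filter.2 ⟨Multiset.mem_toFinset.2 ((mem_glaisher_add_block hr hs hx0).2 hx), ?_⟩⟩
    · dsimp only
      rw [Multiset.sum_add, sum_block]
      omega
    · rw [count_add_block]
      exact Nat.le_add_left _ _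
  · rintro ⟨⟨s, t⟩, x⟩ hz
    obtain ⟨-, hx⟩ := mem_sigma.1 hz
    dsimp only at hx ⊢
    rw [tsub_add_cancel_of_le (block_le (mem_filter.1 hx).2)]
  · rintro ⟨⟨s, t⟩, x⟩ -
    simp only [add_tsub_cancel_right]

theorem card_sigma_sharedRepeatedParts (hr : 2 ≤ r) (n j : ℕ) :
    ((pairs r n j).sigma fun q => sharedRepeatedParts (glaisher r q.1) q.2).card
      = ((markedPairs r n j).filter fun z => z.2 ∈ z.1.2).card := by
  have hr0 : 0 < r := by omega
  refine card_nbij' (fun z => ((z.1.1, z.1.2.erase z.2), z.2))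
    (fun z => ⟨(z.1.1, z.2 ::ₘ z.1.2), z.2⟩) ?_ ?_ ?_ ?_
  · rintro ⟨⟨s, t⟩, a⟩ hz
    obtain ⟨hq, ha⟩ := mem_sigma.1 hz
    obtain ⟨hat, hcount, hag⟩ := mem_filter.1 ha
    rw [Multiset.mem_toFinset] at hat
    dsimp only at hat hcount hag ⊢
    have ha0 := ne_of_mem_of_not_mem hat ((mem_pairs hr0).1 hq).2.2.1
    rw [← Multiset.cons_erase hat] at hq hcount
    rw [Multiset.count_cons_self] at hcount
    have hmem : a ∈ t.erase a := Multiset.count_pos.1 (by omega)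
    obtain ⟨hsum, hs, ht, hcard⟩ := (cons_mem_pairs hr0 ha0).1 hq
    rw [insert_eq_of_mem (Multiset.mem_toFinset.2 hmem)] at hcard
    exact mem_filter.2 ⟨(mem_markedPairs hr0).2 ⟨hsum, hs, ht, hcard, hag⟩, hmem⟩
  · rintro ⟨⟨s, t⟩, a⟩ hz
    obtain ⟨hz, hat⟩ := mem_filter.1 hz
    obtain ⟨hsum, hs, ht, hcard, hag⟩ := (mem_markedPairs hr0).1 hz
    refine mem_sigma.2 ⟨(cons_mem_pairs hr0 (ne_of_mem_of_not_mem hat ht)).2 ⟨hsum, hs, ht, ?_⟩,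
      mem_filter.2 ⟨Multiset.mem_toFinset.2 (Multiset.mem_cons_self _ _), ?_, hag⟩⟩
    · rwa [insert_eq_of_mem (Multiset.mem_toFinset.2 hat)]
    · dsimp only at hat ⊢
      have := Multiset.count_pos.2 hat
      rw [Multiset.count_cons_self]
      omega
  · rintro ⟨⟨s, t⟩, a⟩ hz
    obtain ⟨-, ha⟩ := mem_sigma.1 hz
    dsimp only at ha ⊢
    rw [Multiset.cons_erase (Multiset.mem_toFinset.1 (mem_filter.1 ha).1)]
  · rintro ⟨⟨s, t⟩, a⟩ -
    dsimp only
    rw [Multiset.erase_cons_head]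

theorem card_sigma_sharedSimpleParts (hr : 2 ≤ r) (n j : ℕ) :
    ((pairs r n (j + 1)).sigma fun q => sharedSimpleParts (glaisher r q.1) q.2).card
      = ((markedPairs r n j).filter fun z => z.2 ∉ z.1.2).card := by
  have hr0 : 0 < r := by omega
  refine card_nbij' (fun z => ((z.1.1, z.1.2.erase z.2), z.2))
    (fun z => ⟨(z.1.1, z.2 ::ₘ z.1.2), z.2⟩) ?_ ?_ ?_ ?_
  · rintro ⟨⟨s, t⟩, a⟩ hz
    obtain ⟨hq, ha⟩ := mem_sigma.1 hz
    obtain ⟨hat, hcount, hag⟩ := mem_filter.1 ha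
    rw [Multiset.mem_toFinset] at hat
    dsimp only at hat hcount hag ⊢
    have ha0 := ne_of_mem_of_not_mem hat ((mem_pairs hr0).1 hq).2.2.1
    rw [← Multiset.cons_erase hat] at hq hcount
    rw [Multiset.count_cons_self, add_eq_right, Multiset.count_eq_zero] at hcount
    obtain ⟨hsum, hs, ht, hcard⟩ := (cons_mem_pairs hr0 ha0).1 hq
    rw [card_insert_of_notMem (mt Multiset.mem_toFinset.1 hcount), add_left_inj] at hcard
    exact mem_filter.2 ⟨(mem_markedPairs hr0).2 ⟨hsum, hs, ht, hcard, hag⟩, hcount⟩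
  · rintro ⟨⟨s, t⟩, a⟩ hz
    obtain ⟨hz, hat⟩ := mem_filter.1 hz
    obtain ⟨hsum, hs, ht, hcard, hag⟩ := (mem_markedPairs hr0).1 hz
    have ha0 := ne_of_mem_of_not_mem hag (zero_notMem_glaisher hr hs)
    refine mem_sigma.2 ⟨(cons_mem_pairs hr0 ha0).2 ⟨hsum, hs, ht, ?_⟩,
      mem_filter.2 ⟨Multiset.mem_toFinset.2 (Multiset.mem_cons_self _ _), ?_, hag⟩⟩
    · rw [card_insert_of_notMem (mt Multiset.mem_toFinset.1 hat), hcard]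
    · dsimp only
      rw [Multiset.count_cons_self, Multiset.count_eq_zero.2 hat]
  · rintro ⟨⟨s, t⟩, a⟩ hz
    obtain ⟨-, ha⟩ := mem_sigma.1 hz
    dsimp only at ha ⊢
    rw [Multiset.cons_erase (Multiset.mem_toFinset.1 (mem_filter.1 ha).1)]
  · rintro ⟨⟨s, t⟩, a⟩ -
    dsimp only
    rw [Multiset.erase_cons_head]

theorem sum_card_nonleadingParts (hr : 2 ≤ r) (n j : ℕ) :
    ∑ q ∈ pairs r n j, (nonleadingParts r q.1).card
      = ∑ q ∈ pairs r n j, (sharedRepeatedParts (glaisher r q.1) q.2).card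
        + ∑ q ∈ pairs r n (j + 1), (sharedSimpleParts (glaisher r q.1) q.2).card := by
  simp only [← card_sigma]
  rw [card_sigma_nonleadingParts hr, card_sigma_sharedRepeatedParts hr,
    card_sigma_sharedSimpleParts hr, card_filter_add_card_filter_not]

theorem Tcount_eq_sum_card_sharedSimpleParts (hr : 2 ≤ r) (n j : ℕ) :
    Tcount j r n = ∑ q ∈ pairs r n j, (sharedSimpleParts (glaisher r q.1) q.2).card :=
  (sum_setD_eq hr n j fun s => (midMultParts r s).card).trans <| sum_congr rfl fun q hq => by
    rw [midMultParts_add_nsmul _ (count_glaisher_lt hr ((mem_pairs (by omega)).1 hq).2.1)]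

theorem sum_numDistinctParts_setD_add_Tcount (hr : 2 ≤ r) (n j : ℕ) :
    ∑ p ∈ setD j r n, numDistinctParts p + Tcount j r n
      = ∑ p ∈ setO j r n, numDistinctParts p + Tcount (j + 1) r n := by
  have hr0 : 0 < r := by omega
  have hD : ∑ p ∈ setD j r n, numDistinctParts p
      = ∑ q ∈ pairs r n j, (glaisher r q.1 + r • q.2).toFinset.card :=
    sum_setD_eq hr n j fun s => s.toFinset.card
  have hO : ∑ p ∈ setO j r n, numDistinctParts p
      = ∑ q ∈ pairs r n j, (q.1.toFinset.card + q.2.toFinset.card) :=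
    (sum_setO_eq hr0 n j fun s => s.toFinset.card).trans <| sum_congr rfl fun q hq =>
      card_toFinset_add_map_mul ((mem_pairs hr0).1 hq).2.1 hr0
  have hpt : ∑ q ∈ pairs r n j, ((glaisher r q.1 + r • q.2).toFinset.card
        + (sharedSimpleParts (glaisher r q.1) q.2).card
        + (sharedRepeatedParts (glaisher r q.1) q.2).card)
      = ∑ q ∈ pairs r n j, (q.1.toFinset.card + q.2.toFinset.card + (nonleadingParts r q.1).card) :=
    sum_congr rfl fun q hq => card_toFinset_glaisher_add_nsmul hr ((mem_pairs hr0).1 hq).2.1 q.2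
  have hshift := sum_card_nonleadingParts hr n j
  simp only [sum_add_distrib] at hpt hO
  rw [hD, hO, Tcount_eq_sum_card_sharedSimpleParts hr, Tcount_eq_sum_card_sharedSimpleParts hr]
  omega

end BeckIdentity

/-- `b'_{j,r}(n) = T_{j+1,r}(n) - T_{j,r}(n)` in the integers. -/
theorem bDiff'_eq (n j r : ℕ) (hr : 2 ≤ r) :
    bDiff' j r n = (Tcount (j + 1) r n : ℤ) - (Tcount j r n : ℤ) := by
  have h := BeckIdentity.sum_numDistinctParts_setD_add_Tcount hr n j
  rw [bDiff', ← Nat.cast_sum, ← Nat.cast_sum]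
  omega
end
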